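/- arXiv:2004.00424 — 10 statements merged into one kernel-verified Lean document; each statement's English description precedes it below -/
import Mathlib

section
/- If h : (-a,a) → ℝ is any C^1 function with h'(0) = 1 satisfying Schröder's equation h(D(x)) = λ h(x) for all x ∈ (-a,a), then for every x ∈ (-a,a) the infinite product ∏_{i=0}^{∞} D'(D^i(x))/λ converges and h'(x) = ∏_{i=0}^{∞} D'(D^i(x))/λ. -/
/-!
Differentiating Schröder's equation `h ∘ D = λ h` gives `h'(z) = h'(D z) · D'(z)/λ`; iterating
along the orbit of `x`, `h'(x) = h'(Dⁿ x) · ∏_{i<n} D'(Dⁱ x)/λ`. The orbit tends to the fixed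
point `0`, since a limit point `p` of the orbit satisfies `‖D p‖ = ‖p‖`, which forces `p = 0`.
Hence `h'(Dⁿ x) → h'(0) = 1` and the partial products converge to `h'(x)`.
-/

open Filter Metric Set Topology

section OrbitToZero

variable {E : Type*} [NormedAddCommGroup E] {D : E → E} {r : ℝ}

theorem norm_apply_le_of_norm_apply_lt (hD0 : D 0 = 0)
    (hlt : ∀ z ∈ ball (0 : E) r, z ≠ 0 → ‖D z‖ < ‖z‖) {z : E} (hz : z ∈ ball (0 : E) r) :
    ‖D z‖ ≤ ‖z‖ := by
  rcases eq_or_ne z 0 with rfl | hz0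
  · simp [hD0]
  · exact (hlt z hz hz0).le

theorem mapsTo_ball_of_norm_apply_lt (hD0 : D 0 = 0)
    (hlt : ∀ z ∈ ball (0 : E) r, z ≠ 0 → ‖D z‖ < ‖z‖) : MapsTo D (ball 0 r) (ball 0 r) :=
  fun _ hz => mem_ball_zero_iff.2 <|
    (norm_apply_le_of_norm_apply_lt hD0 hlt hz).trans_lt (mem_ball_zero_iff.1 hz)

theorem antitone_norm_iterate_of_norm_apply_lt (hD0 : D 0 = 0)
    (hlt : ∀ z ∈ ball (0 : E) r, z ≠ 0 → ‖D z‖ < ‖z‖) {x : E} (hx : x ∈ ball (0 : E) r) :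
    Antitone fun n => ‖D^[n] x‖ := by
  refine antitone_nat_of_succ_le fun n => ?_
  rw [Function.iterate_succ_apply']
  exact norm_apply_le_of_norm_apply_lt hD0 hlt
    ((mapsTo_ball_of_norm_apply_lt hD0 hlt).iterate n hx)

theorem tendsto_iterate_nhds_zero_of_norm_apply_lt [ProperSpace E]
    (hD : ContinuousOn D (ball 0 r)) (hD0 : D 0 = 0)
    (hlt : ∀ z ∈ ball (0 : E) r, z ≠ 0 → ‖D z‖ < ‖z‖) {x : E} (hx : x ∈ ball (0 : E) r) :
    Tendsto (fun n => D^[n] x) atTop (𝓝 0) := by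
  set y : ℕ → E := fun n => D^[n] x
  have hanti := antitone_norm_iterate_of_norm_apply_lt hD0 hlt hx
  have hyK : ∀ n, y n ∈ closedBall (0 : E) ‖x‖ := fun n =>
    mem_closedBall_zero_iff.2 (hanti n.zero_le)
  have hKball : closedBall (0 : E) ‖x‖ ⊆ ball 0 r :=
    closedBall_subset_ball (mem_ball_zero_iff.1 hx)
  obtain ⟨L, hL⟩ : ∃ L, Tendsto (fun n => ‖y n‖) atTop (𝓝 L) :=
    ⟨_, tendsto_atTop_ciInf hanti ⟨0, by rintro _ ⟨n, rfl⟩; exact norm_nonneg _⟩⟩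
  obtain ⟨p, hpK, φ, hφ, hyφ⟩ := (isCompact_closedBall (0 : E) ‖x‖).tendsto_subseq hyK
  have hp : ‖p‖ = L := tendsto_nhds_unique hyφ.norm (hL.comp hφ.tendsto_atTop)
  have hDp : ‖D p‖ = L := by
    have hDyφ : Tendsto (fun n => D (y (φ n))) atTop (𝓝 (D p)) :=
      (hD.continuousAt (isOpen_ball.mem_nhds (hKball hpK))).tendsto.comp hyφ
    refine tendsto_nhds_unique hDyφ.norm ?_
    have := hL.comp ((tendsto_add_atTop_nat 1).comp hφ.tendsto_atTop)
    simpa only [Function.comp_def, y, Function.iterate_succ_apply'] using this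
  have hp0 : p = 0 := by
    by_contra hne
    exact (hlt p (hKball hpK) hne).ne (hDp.trans hp.symm)
  rw [tendsto_zero_iff_norm_tendsto_zero]
  simpa [← hp, hp0] using hL

end OrbitToZero

theorem deriv_eq_deriv_comp_mul_of_comp_eq_const_mul {𝕜 : Type*} [NontriviallyNormedField 𝕜]
    {D h : 𝕜 → 𝕜} {lam z : 𝕜} (hlam : lam ≠ 0) (hD : DifferentiableAt 𝕜 D z)
    (hh : DifferentiableAt 𝕜 h (D z)) (hSch : (fun w => h (D w)) =ᶠ[𝓝 z] fun w => lam * h w) :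
    deriv h z = deriv h (D z) * (deriv D z / lam) := by
  have hchain : deriv h (D z) * deriv D z = lam * deriv h z := by
    rw [← deriv_comp z hh hD, ← deriv_const_mul_field]
    exact hSch.deriv_eq
  field_simp
  linear_combination hchain.symm

theorem prod_range_eq_of_eq_mul {M : Type*} [CommMonoid M] {u c : ℕ → M}
    (hu : ∀ i, u i = u (i + 1) * c i) (n : ℕ) : u 0 = u n * ∏ i ∈ Finset.range n, c i := by
  induction n with
  | zero => simp
  | succ n ih => rw [ih, Finset.prod_range_succ, hu n, mul_assoc, mul_comm (c n)]

theorem tendsto_prod_range_of_eq_mul {𝕜 : Type*} [NormedField 𝕜] {u c : ℕ → 𝕜}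
    (hu : ∀ i, u i = u (i + 1) * c i) (hlim : Tendsto u atTop (𝓝 1)) :
    Tendsto (fun n => ∏ i ∈ Finset.range n, c i) atTop (𝓝 (u 0)) := by
  have hdiv : Tendsto (fun n => u 0 / u n) atTop (𝓝 (u 0 / 1)) :=
    tendsto_const_nhds.div hlim one_ne_zero
  rw [div_one] at hdiv
  refine hdiv.congr' ?_
  filter_upwards [hlim.eventually_ne one_ne_zero] with n hn
  rw [prod_range_eq_of_eq_mul hu n, mul_div_cancel_left₀ _ hn]

theorem deriv_conjugation_eq_infinite_prod_general
    (a : ℝ) (D : ℝ → ℝ) (lam : ℝ)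
    (hD : ContDiffOn ℝ 1 D (Set.Ioo (-a) a))
    (hD0 : D 0 = 0)
    (hlam0 : 0 < lam)
    (hcontract : ∀ x ∈ Set.Ioo (-a) a, x ≠ 0 → |D x| < |x|)
    (h : ℝ → ℝ)
    (hh : ContDiffOn ℝ 1 h (Set.Ioo (-a) a))
    (hh'0 : deriv h 0 = 1)
    (hSch : ∀ x ∈ Set.Ioo (-a) a, h (D x) = lam * h x) :
    ∀ x ∈ Set.Ioo (-a) a,
      Filter.Tendsto (fun n : ℕ => ∏ i ∈ Finset.range n, deriv D (D^[i] x) / lam)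
        Filter.atTop (nhds (deriv h x)) := by
  have hball : ball (0 : ℝ) a = Ioo (-a) a := by simp [Real.ball_eq_Ioo]
  have hlt : ∀ z ∈ ball (0 : ℝ) a, z ≠ 0 → ‖D z‖ < ‖z‖ := by
    simpa only [hball, Real.norm_eq_abs] using hcontract
  have hmaps : MapsTo D (Ioo (-a) a) (Ioo (-a) a) := hball ▸ mapsTo_ball_of_norm_apply_lt hD0 hlt
  intro x hx
  have horbit : Tendsto (fun n => D^[n] x) atTop (𝓝 0) :=
    tendsto_iterate_nhds_zero_of_norm_apply_lt (hball ▸ hD.continuousOn) hD0 hlt (hball ▸ hx)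
  have h0 : (0 : ℝ) ∈ Ioo (-a) a := hball ▸ mem_ball_self ((abs_nonneg x).trans_lt (abs_lt.2 hx))
  have hderiv_orbit : Tendsto (fun n => deriv h (D^[n] x)) atTop (𝓝 1) :=
    hh'0 ▸ ((hh.continuousOn_deriv_of_isOpen isOpen_Ioo le_rfl).continuousAt
      (isOpen_Ioo.mem_nhds h0)).tendsto.comp horbit
  refine tendsto_prod_range_of_eq_mul (fun n => ?_) hderiv_orbit
  have hz := hmaps.iterate n hx
  rw [Function.iterate_succ_apply']
  exact deriv_eq_deriv_comp_mul_of_comp_eq_const_mul hlam0.ne'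
    ((hD.differentiableOn one_ne_zero).differentiableAt (isOpen_Ioo.mem_nhds hz))
    ((hh.differentiableOn one_ne_zero).differentiableAt (isOpen_Ioo.mem_nhds (hmaps hz)))
    (eventually_of_mem (isOpen_Ioo.mem_nhds hz) fun w hw => hSch w hw)

/-- If `h` is any `C¹` function on `(-a,a)` with `h'(0) = 1` satisfying Schröder's
equation `h (D x) = λ h x`, then for every `x ∈ (-a,a)` the infinite product
`∏_{i=0}^∞ D'(Dⁱ(x))/λ` converges and equals `h'(x)`. -/
theorem deriv_conjugation_eq_infinite_prod
    (a ε : ℝ) (ha : 0 < a) (hε : 0 < ε) (D : ℝ → ℝ) (lam : ℝ)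
    (hD : ContDiffOn ℝ 1 D (Set.Ioo (-a) a))
    (hHolder : ∃ k > 0, ∀ y ∈ Set.Ioo (-a) a, ∀ z ∈ Set.Ioo (-a) a,
      |deriv D z - deriv D y| ≤ k * |z - y| ^ ε)
    (hD0 : D 0 = 0)
    (hlam : deriv D 0 = lam) (hlam0 : 0 < lam) (hlam1 : lam < 1)
    (hcontract : ∀ x ∈ Set.Ioo (-a) a, x ≠ 0 → |D x| < |x|)
    (h : ℝ → ℝ)
    (hh : ContDiffOn ℝ 1 h (Set.Ioo (-a) a))
    (hh'0 : deriv h 0 = 1)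
    (hSch : ∀ x ∈ Set.Ioo (-a) a, h (D x) = lam * h x) :
    ∀ x ∈ Set.Ioo (-a) a,
      Filter.Tendsto (fun n : ℕ => ∏ i ∈ Finset.range n, deriv D (D^[i] x) / lam)
        Filter.atTop (nhds (deriv h x)) :=
  deriv_conjugation_eq_infinite_prod_general a D lam hD hD0 hlam0 hcontract h hh hh'0 hSch
end

section
/- The conjugation is unique: if h₁, h₂ : (-a,a) → ℝ are C^1 functions with h₁(0) = h₂(0) = 0 and h₁'(0) = h₂'(0) = 1, both satisfying Schröder's equation h(D(x)) = λ h(x) for all x ∈ (-a,a), then h₁(x) = h₂(x) for all x ∈ (-a,a). -/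
/-!
Since `h₁' 0 = h₂' 0 = 1 ≠ 0`, the difference `φ = h₁ - h₂` is `o(h₁)` at `0`. The orbit `Dⁿ x`
tends to `0` (its norms decrease, and any limit point `y` of it has `‖D y‖ = ‖y‖`), and along it
both `φ` and `h₁` pick up the factor `λⁿ`. Cancelling it, the constant `φ x` is `o` of the
constant `h₁ x`, so `φ x = 0`.
-/

open Asymptotics Filter Topology Metric Set

theorem sub_isLittleO_sub_of_hasDerivAt {𝕜 : Type*} [NontriviallyNormedField 𝕜] {f g : 𝕜 → 𝕜}
    {f' x : 𝕜} (hf : HasDerivAt f f' x) (hg : HasDerivAt g f' x) (hf' : f' ≠ 0)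
    (hfg : f x = g x) :
    (fun y => f y - g y) =o[𝓝 x] (fun y => f y - f x) := by
  have hsub : (fun y => f y - g y) =o[𝓝 x] (fun y => y - x) := by
    simpa [hfg] using (hf.sub hg).isLittleO
  have hlin : (fun y => y - x) =O[𝓝 x] (fun y => (y - x) • f') :=
    (isBigO_const_mul_self f'⁻¹ _ _).congr_left fun y => by rw [smul_eq_mul]; field_simp
  have hrev : (fun y => y - x) =O[𝓝 x] (fun y => f y - f x) :=
    hlin.trans <| (hf.isLittleO.trans_isBigO hlin).right_isBigO_add.congr_right fun y => by ring
  exact hsub.trans_isBigO hrev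

theorem iterate_map_eq_pow_mul {α M : Type*} [Monoid M] {D : α → α} {h : α → M} {lam : M}
    {s : Set α} (hD : MapsTo D s s) (hh : ∀ x ∈ s, h (D x) = lam * h x) {x : α} (hx : x ∈ s)
    (n : ℕ) : h (D^[n] x) = lam ^ n * h x := by
  induction n with
  | zero => simp
  | succ n ih =>
    rw [Function.iterate_succ_apply', hh _ (hD.iterate n hx), ih, pow_succ', mul_assoc]

theorem eq_of_sub_isLittleO_of_iterate {α 𝕜 : Type*} [NormedField 𝕜] {D : α → α} {l : Filter α}
    {h₁ h₂ : α → 𝕜} {lam : 𝕜} {x : α} (hx : Tendsto (fun n => D^[n] x) atTop l)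
    (hsub : (fun y => h₁ y - h₂ y) =o[l] h₁) (hlam : lam ≠ 0)
    (hh₁ : ∀ n, h₁ (D^[n] x) = lam ^ n * h₁ x) (hh₂ : ∀ n, h₂ (D^[n] x) = lam ^ n * h₂ x) :
    h₁ x = h₂ x := by
  have horbit : (fun n => lam ^ n * (h₁ x - h₂ x)) =o[atTop] (fun n => lam ^ n * h₁ x) :=
    (hsub.comp_tendsto hx).congr (fun n => by simp [hh₁, hh₂, mul_sub]) (fun n => by simp [hh₁])
  have hconst : (fun _ : ℕ => h₁ x - h₂ x) =o[atTop] (fun _ : ℕ => h₁ x) :=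
    ((isBigO_refl (fun n => (lam ^ n)⁻¹) atTop).mul_isLittleO horbit).congr
      (fun n => inv_mul_cancel_left₀ (pow_ne_zero n hlam) _)
      (fun n => inv_mul_cancel_left₀ (pow_ne_zero n hlam) _)
  exact sub_eq_zero.mp (isLittleO_const_const_iff.mp hconst)

section Contraction

variable {E : Type*} [NormedAddCommGroup E] {D : E → E} {a : ℝ}

theorem norm_map_le_of_norm_map_lt (hD0 : D 0 = 0)
    (hD : ∀ y ∈ ball 0 a, y ≠ 0 → ‖D y‖ < ‖y‖) {y : E} (hy : y ∈ ball 0 a) : ‖D y‖ ≤ ‖y‖ := by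
  rcases eq_or_ne y 0 with rfl | hy0
  · simp [hD0]
  · exact (hD y hy hy0).le

theorem mapsTo_closedBall_of_norm_map_lt (hD0 : D 0 = 0)
    (hD : ∀ y ∈ ball 0 a, y ≠ 0 → ‖D y‖ < ‖y‖) {r : ℝ} (hr : r < a) :
    MapsTo D (closedBall 0 r) (closedBall 0 r) := fun _ hy => by
  rw [mem_closedBall_zero_iff] at hy ⊢
  exact (norm_map_le_of_norm_map_lt hD0 hD (mem_ball_zero_iff.mpr (hy.trans_lt hr))).trans hy

theorem mapsTo_ball_of_norm_map_lt (hD0 : D 0 = 0)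
    (hD : ∀ y ∈ ball 0 a, y ≠ 0 → ‖D y‖ < ‖y‖) : MapsTo D (ball 0 a) (ball 0 a) := fun _ hy =>
  mem_ball_zero_iff.mpr ((norm_map_le_of_norm_map_lt hD0 hD hy).trans_lt (mem_ball_zero_iff.mp hy))

theorem tendsto_iterate_zero_of_norm_map_lt [ProperSpace E] (hD0 : D 0 = 0)
    (hD : ∀ y ∈ ball 0 a, y ≠ 0 → ‖D y‖ < ‖y‖) (hDc : ContinuousOn D (ball 0 a)) {x : E}
    (hx : x ∈ ball 0 a) : Tendsto (fun n => D^[n] x) atTop (𝓝 0) := by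
  set T : ℕ → E := fun n => D^[n] x
  have hT : ∀ n, T n ∈ closedBall 0 ‖x‖ := fun n =>
    (mapsTo_closedBall_of_norm_map_lt hD0 hD (mem_ball_zero_iff.mp hx)).iterate n
      (mem_closedBall_zero_iff.mpr le_rfl)
  have hTball : ∀ n, T n ∈ ball 0 a := fun n =>
    closedBall_subset_ball (mem_ball_zero_iff.mp hx) (hT n)
  have hanti : Antitone fun n => ‖T n‖ := antitone_nat_of_succ_le fun n => by
    simpa only [T, Function.iterate_succ_apply'] using norm_map_le_of_norm_map_lt hD0 hD (hTball n)
  set L := ⨅ n, ‖T n‖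
  have hL : Tendsto (fun n => ‖T n‖) atTop (𝓝 L) :=
    tendsto_atTop_ciInf hanti ⟨0, by rintro _ ⟨n, rfl⟩; exact norm_nonneg _⟩
  obtain ⟨y, hy, φ, hφ, hTφ⟩ := (isCompact_closedBall (0 : E) ‖x‖).tendsto_subseq hT
  have hyball : y ∈ ball 0 a := closedBall_subset_ball (mem_ball_zero_iff.mp hx) hy
  have hyL : ‖y‖ = L := tendsto_nhds_unique (hTφ.norm) (hL.comp hφ.tendsto_atTop)
  have hDyL : ‖D y‖ = L := by
    have hnext : Tendsto (fun n => T (φ n + 1)) atTop (𝓝 (D y)) := by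
      simpa only [T, Function.iterate_succ_apply', Function.comp_def] using
        (hDc.continuousAt (isOpen_ball.mem_nhds hyball)).tendsto.comp hTφ
    exact tendsto_nhds_unique hnext.norm
      (hL.comp ((tendsto_add_atTop_nat 1).comp hφ.tendsto_atTop))
  have hy0 : y = 0 := by
    by_contra hy0
    exact (hD y hyball hy0).ne (hDyL.trans hyL.symm)
  rw [tendsto_zero_iff_norm_tendsto_zero]
  simpa [← hyL, hy0] using hL

end Contraction

theorem conjugation_unique_general
    (a : ℝ) (D : ℝ → ℝ) (lam : ℝ)
    (hD : ContDiffOn ℝ 1 D (Set.Ioo (-a) a))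
    (hD0 : D 0 = 0)
    (hlam0 : 0 < lam)
    (hcontract : ∀ x ∈ Set.Ioo (-a) a, x ≠ 0 → |D x| < |x|)
    (h₁ h₂ : ℝ → ℝ)
    (hh₁0 : h₁ 0 = 0) (hh₂0 : h₂ 0 = 0)
    (hh₁'0 : deriv h₁ 0 = 1) (hh₂'0 : deriv h₂ 0 = 1)
    (hSch₁ : ∀ x ∈ Set.Ioo (-a) a, h₁ (D x) = lam * h₁ x)
    (hSch₂ : ∀ x ∈ Set.Ioo (-a) a, h₂ (D x) = lam * h₂ x) :
    ∀ x ∈ Set.Ioo (-a) a, h₁ x = h₂ x := by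
  have hball : Ioo (-a) a = ball (0 : ℝ) a := by simp [Real.ball_eq_Ioo]
  simp only [hball, ← Real.norm_eq_abs] at hD hcontract hSch₁ hSch₂ ⊢
  have hmaps := mapsTo_ball_of_norm_map_lt hD0 hcontract
  have hd₁ : HasDerivAt h₁ 1 0 :=
    hh₁'0 ▸ (differentiableAt_of_deriv_ne_zero (by simp [hh₁'0])).hasDerivAt
  have hd₂ : HasDerivAt h₂ 1 0 :=
    hh₂'0 ▸ (differentiableAt_of_deriv_ne_zero (by simp [hh₂'0])).hasDerivAt
  have hsub : (fun y => h₁ y - h₂ y) =o[𝓝 0] h₁ := by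
    simpa [hh₁0] using sub_isLittleO_sub_of_hasDerivAt hd₁ hd₂ one_ne_zero (hh₁0.trans hh₂0.symm)
  intro x hx
  exact eq_of_sub_isLittleO_of_iterate
    (tendsto_iterate_zero_of_norm_map_lt hD0 hcontract hD.continuousOn hx) hsub hlam0.ne'
    (iterate_map_eq_pow_mul hmaps hSch₁ hx) (iterate_map_eq_pow_mul hmaps hSch₂ hx)

/-- **Uniqueness of the conjugation.** If `h₁, h₂` are `C¹` functions on `(-a,a)` with
`h₁ 0 = h₂ 0 = 0`, `h₁' 0 = h₂' 0 = 1`, both satisfying Schröder's equation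
`h (D x) = λ h x` on `(-a,a)`, then `h₁ = h₂` on `(-a,a)`. -/
theorem conjugation_unique
    (a ε : ℝ) (ha : 0 < a) (hε : 0 < ε) (D : ℝ → ℝ) (lam : ℝ)
    (hD : ContDiffOn ℝ 1 D (Set.Ioo (-a) a))
    (hHolder : ∃ k > 0, ∀ y ∈ Set.Ioo (-a) a, ∀ z ∈ Set.Ioo (-a) a,
      |deriv D z - deriv D y| ≤ k * |z - y| ^ ε)
    (hD0 : D 0 = 0)
    (hlam : deriv D 0 = lam) (hlam0 : 0 < lam) (hlam1 : lam < 1)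
    (hcontract : ∀ x ∈ Set.Ioo (-a) a, x ≠ 0 → |D x| < |x|)
    (h₁ h₂ : ℝ → ℝ)
    (hh₁ : ContDiffOn ℝ 1 h₁ (Set.Ioo (-a) a))
    (hh₂ : ContDiffOn ℝ 1 h₂ (Set.Ioo (-a) a))
    (hh₁0 : h₁ 0 = 0) (hh₂0 : h₂ 0 = 0)
    (hh₁'0 : deriv h₁ 0 = 1) (hh₂'0 : deriv h₂ 0 = 1)
    (hSch₁ : ∀ x ∈ Set.Ioo (-a) a, h₁ (D x) = lam * h₁ x)
    (hSch₂ : ∀ x ∈ Set.Ioo (-a) a, h₂ (D x) = lam * h₂ x) :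
    ∀ x ∈ Set.Ioo (-a) a, h₁ x = h₂ x :=
  conjugation_unique_general a D lam hD hD0 hlam0 hcontract h₁ h₂ hh₁0 hh₂0 hh₁'0 hh₂'0 hSch₁ hSch₂
end

section
/- Assume additionally that there are constants 0 < b̄ < b < 1 and k > 0 such that b̄ < D'(x) < b and |D(x)| ≤ b|x| for all x ∈ (-a,a), and that |log D'(z) − log D'(y)| ≤ k|z−y|^ε for all y, z ∈ (-a,a). Then the series f(x) = Σ_{j=0}^{∞} (log D'(D^j(x)) − log λ) converges absolutely and uniformly on (-a,a), f(0) = 0, and |f(y) − f(x)| ≤ (k/(1−b^ε)) |x−y|^ε for all x, y ∈ (-a,a); in particular f is ε-Hölder continuous on (-a,a). -/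
/-!
By the mean value theorem `D` is `b`-Lipschitz on `(-a, a)`; as it fixes `0`, every iterate `Dʲ`
maps the interval into itself and is `bʲ`-Lipschitz there. Composing with the `ε`-Hölder function
`log D'` gives `|log D'(Dʲ y) - log D'(Dʲ x)| ≤ k (b^ε)ʲ |x - y|^ε`. Taking `y = 0` bounds the
`j`-th term of the series by `k (b^ε)ʲ a^ε` (Weierstrass M-test), and summing the geometric
series gives the Hölder constant `k / (1 - b^ε)`.
-/

open Set Metric
open scoped NNReal

section

variable {X Y : Type*} [PseudoMetricSpace X] [PseudoMetricSpace Y]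
  {T : X → X} {s : Set X} {p : X} {R : ℝ} {C K r : ℝ≥0}

theorem HolderOnWith.of_dist_le {f : X → Y}
    (h : ∀ x ∈ s, ∀ y ∈ s, dist (f x) (f y) ≤ C * dist x y ^ (r : ℝ)) :
    HolderOnWith C r f s := by
  intro x hx y hy
  rw [edist_dist, edist_dist, ENNReal.ofReal_rpow_of_nonneg dist_nonneg r.coe_nonneg,
    ← ENNReal.ofReal_coe_nnreal, ← ENNReal.ofReal_mul C.coe_nonneg]
  exact ENNReal.ofReal_le_ofReal (h x hx y hy)

theorem LipschitzOnWith.mapsTo_ball (hT : LipschitzOnWith K T (ball p R)) (hK : K ≤ 1)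
    (hTp : T p = p) : MapsTo T (ball p R) (ball p R) := by
  intro x hx
  have hp : p ∈ ball p R := mem_ball_self (pos_of_mem_ball hx)
  calc dist (T x) p = dist (T x) (T p) := by rw [hTp]
    _ ≤ K * dist x p := hT.dist_le_mul x hx p hp
    _ ≤ dist x p := mul_le_of_le_one_left dist_nonneg (by exact_mod_cast hK)
    _ < R := hx

theorem LipschitzOnWith.iterate (hT : LipschitzOnWith K T s) (hs : MapsTo T s s) :
    ∀ n : ℕ, LipschitzOnWith (K ^ n) T^[n] s
  | 0 => by simpa using LipschitzWith.id.lipschitzOnWith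
  | n + 1 => by
    rw [Function.iterate_succ', pow_succ']
    exact hT.comp (hT.iterate hs n) (hs.iterate n)

theorem HolderOnWith.dist_comp_iterate_le {φ : X → Y} (hφ : HolderOnWith C r φ s)
    (hT : LipschitzOnWith K T s) (hs : MapsTo T s s) {x y : X} (hx : x ∈ s) (hy : y ∈ s)
    (n : ℕ) :
    dist (φ (T^[n] x)) (φ (T^[n] y)) ≤ C * ((K : ℝ) ^ (r : ℝ)) ^ n * dist x y ^ (r : ℝ) := by
  have hTn : dist (T^[n] x) (T^[n] y) ≤ (K : ℝ) ^ n * dist x y := by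
    simpa using (hT.iterate hs n).dist_le_mul x hx y hy
  calc dist (φ (T^[n] x)) (φ (T^[n] y))
      ≤ C * ((K : ℝ) ^ n * dist x y) ^ (r : ℝ) :=
        hφ.dist_le_of_le (hs.iterate n hx) (hs.iterate n hy) hTn
    _ = C * ((K : ℝ) ^ (r : ℝ)) ^ n * dist x y ^ (r : ℝ) := by
      rw [Real.mul_rpow (by positivity) dist_nonneg, Real.rpow_pow_comm K.coe_nonneg, mul_assoc]

end

theorem hasSum_mul_geometric_mul {q : ℝ} (h₀ : 0 ≤ q) (h₁ : q < 1) (a c : ℝ) :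
    HasSum (fun n : ℕ => a * q ^ n * c) (a / (1 - q) * c) := by
  simpa only [div_eq_mul_inv] using ((hasSum_geometric_of_lt_one h₀ h₁).mul_left a).mul_right c

namespace HolderOnWith

variable {X : Type*} [PseudoMetricSpace X] {T : X → X} {φ : X → ℝ} {p x y : X} {R : ℝ}
  {C K r : ℝ≥0}

theorem abs_comp_iterate_sub_le (hφ : HolderOnWith C r φ (ball p R))
    (hT : LipschitzOnWith K T (ball p R)) (hK : K ≤ 1) (hTp : T p = p) (hx : x ∈ ball p R)
    (n : ℕ) : |φ (T^[n] x) - φ p| ≤ C * ((K : ℝ) ^ (r : ℝ)) ^ n * R ^ (r : ℝ) := by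
  have hp : p ∈ ball p R := mem_ball_self (pos_of_mem_ball hx)
  calc |φ (T^[n] x) - φ p| = dist (φ (T^[n] x)) (φ (T^[n] p)) := by
        rw [Function.iterate_fixed hTp, Real.dist_eq]
    _ ≤ C * ((K : ℝ) ^ (r : ℝ)) ^ n * dist x p ^ (r : ℝ) :=
        hφ.dist_comp_iterate_le hT (hT.mapsTo_ball hK hTp) hx hp n
    _ ≤ C * ((K : ℝ) ^ (r : ℝ)) ^ n * R ^ (r : ℝ) := by
        gcongr
        exact (mem_ball.1 hx).le

variable (hφ : HolderOnWith C r φ (ball p R)) (hT : LipschitzOnWith K T (ball p R))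
  (hK : K < 1) (hr : 0 < r) (hTp : T p = p)
include hφ hT hK hr hTp

theorem summable_abs_comp_iterate_sub (hx : x ∈ ball p R) :
    Summable fun n => |φ (T^[n] x) - φ p| := by
  have hq : (K : ℝ) ^ (r : ℝ) < 1 := Real.rpow_lt_one K.coe_nonneg hK hr
  exact (hasSum_mul_geometric_mul (by positivity) hq C _).summable.of_nonneg_of_le
    (fun _ => abs_nonneg _) (hφ.abs_comp_iterate_sub_le hT hK.le hTp hx)

theorem tendstoUniformlyOn_sum_comp_iterate_sub :
    TendstoUniformlyOn (fun N x => ∑ n ∈ Finset.range N, (φ (T^[n] x) - φ p))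
      (fun x => ∑' n, (φ (T^[n] x) - φ p)) Filter.atTop (ball p R) := by
  have hq : (K : ℝ) ^ (r : ℝ) < 1 := Real.rpow_lt_one K.coe_nonneg hK hr
  exact tendstoUniformlyOn_tsum_nat (hasSum_mul_geometric_mul (by positivity) hq C _).summable
    fun n x hx => (hφ.abs_comp_iterate_sub_le hT hK.le hTp hx n)

theorem abs_tsum_comp_iterate_sub_sub_le (hx : x ∈ ball p R) (hy : y ∈ ball p R) :
    |∑' n, (φ (T^[n] x) - φ p) - ∑' n, (φ (T^[n] y) - φ p)| ≤
      C / (1 - (K : ℝ) ^ (r : ℝ)) * dist x y ^ (r : ℝ) := by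
  have hq : (K : ℝ) ^ (r : ℝ) < 1 := Real.rpow_lt_one K.coe_nonneg hK hr
  rw [← (hφ.summable_abs_comp_iterate_sub hT hK hr hTp hx).of_abs.tsum_sub
    (hφ.summable_abs_comp_iterate_sub hT hK hr hTp hy).of_abs, ← Real.norm_eq_abs]
  refine tsum_of_norm_bounded (hasSum_mul_geometric_mul (by positivity) hq C _) fun n => ?_
  rw [sub_sub_sub_cancel_right, ← dist_eq_norm]
  exact hφ.dist_comp_iterate_le hT (hT.mapsTo_ball hK.le hTp) hx hy n

end HolderOnWith

theorem log_series_absolutely_uniformly_convergent_and_holder_general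
    (a ε : ℝ) (hε : 0 < ε) (D : ℝ → ℝ) (lam : ℝ)
    (hD : ContDiffOn ℝ 1 D (Set.Ioo (-a) a))
    (hD0 : D 0 = 0)
    (hlam : deriv D 0 = lam)
    (bbar b k : ℝ)
    (hbbar0 : 0 < bbar) (hbbarb : bbar < b) (hb1 : b < 1) (hk : 0 < k)
    (hderivD : ∀ x ∈ Set.Ioo (-a) a, bbar < deriv D x ∧ deriv D x < b)
    (hlogHolder : ∀ y ∈ Set.Ioo (-a) a, ∀ z ∈ Set.Ioo (-a) a,
      |Real.log (deriv D z) - Real.log (deriv D y)| ≤ k * |z - y| ^ ε) :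
    (∀ x ∈ Set.Ioo (-a) a,
      Summable (fun j : ℕ => |Real.log (deriv D (D^[j] x)) - Real.log lam|)) ∧
    TendstoUniformlyOn
      (fun (n : ℕ) (x : ℝ) =>
        ∑ j ∈ Finset.range n, (Real.log (deriv D (D^[j] x)) - Real.log lam))
      (fun x : ℝ => ∑' j : ℕ, (Real.log (deriv D (D^[j] x)) - Real.log lam))
      Filter.atTop (Set.Ioo (-a) a) ∧
    (∑' j : ℕ, (Real.log (deriv D (D^[j] (0 : ℝ))) - Real.log lam)) = 0 ∧
    (∀ x ∈ Set.Ioo (-a) a, ∀ y ∈ Set.Ioo (-a) a,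
      |(∑' j : ℕ, (Real.log (deriv D (D^[j] y)) - Real.log lam)) -
        (∑' j : ℕ, (Real.log (deriv D (D^[j] x)) - Real.log lam))| ≤
        (k / (1 - b ^ ε)) * |x - y| ^ ε) := by
  lift k to ℝ≥0 using hk.le
  lift ε to ℝ≥0 using hε.le
  lift b to ℝ≥0 using (hbbar0.trans hbbarb).le
  subst hlam
  rw [← Real.ball_zero_eq_Ioo] at hD hderivD hlogHolder ⊢
  have hLip : LipschitzOnWith b D (ball 0 a) := by
    refine (convex_ball 0 a).lipschitzOnWith_of_nnnorm_deriv_le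
      (fun x hx => (hD.differentiableOn one_ne_zero).differentiableAt (isOpen_ball.mem_nhds hx))
      fun x hx => ?_
    obtain ⟨hlow, hup⟩ := hderivD x hx
    rw [← NNReal.coe_le_coe, coe_nnnorm, Real.norm_eq_abs, abs_le]
    constructor <;> linarith
  have hφ : HolderOnWith k ε (fun z => Real.log (deriv D z)) (ball 0 a) :=
    .of_dist_le fun x hx y hy => by simpa only [Real.dist_eq] using hlogHolder y hy x hx
  have hb : b < 1 := by exact_mod_cast hb1
  have hε' : 0 < ε := by exact_mod_cast hε
  refine ⟨fun x hx => hφ.summable_abs_comp_iterate_sub hLip hb hε' hD0 hx,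
    hφ.tendstoUniformlyOn_sum_comp_iterate_sub hLip hb hε' hD0,
    by simp [Function.iterate_fixed hD0], fun x hx y hy => ?_⟩
  rw [abs_sub_comm, ← Real.dist_eq]
  exact hφ.abs_tsum_comp_iterate_sub_sub_le hLip hb hε' hD0 hx hy

/-- Under the additional bounds `b̄ < D' < b < 1`, `|D x| ≤ b |x|` and the ε-Hölder
estimate `|log D'(z) − log D'(y)| ≤ k |z−y|^ε` on `(-a,a)`, the series
`f(x) = Σ_{j=0}^∞ (log D'(Dʲ(x)) − log λ)` converges absolutely and uniformly on
`(-a,a)`, `f(0) = 0`, and `|f(y) − f(x)| ≤ (k/(1−b^ε)) |x−y|^ε` on `(-a,a)`;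
in particular `f` is ε-Hölder continuous on `(-a,a)`. -/
theorem log_series_absolutely_uniformly_convergent_and_holder
    (a ε : ℝ) (ha : 0 < a) (hε : 0 < ε) (D : ℝ → ℝ) (lam : ℝ)
    (hD : ContDiffOn ℝ 1 D (Set.Ioo (-a) a))
    (hD0 : D 0 = 0)
    (hlam : deriv D 0 = lam) (hlam0 : 0 < lam) (hlam1 : lam < 1)
    (hcontract : ∀ x ∈ Set.Ioo (-a) a, x ≠ 0 → |D x| < |x|)
    (bbar b k : ℝ)
    (hbbar0 : 0 < bbar) (hbbarb : bbar < b) (hb1 : b < 1) (hk : 0 < k)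
    (hderivD : ∀ x ∈ Set.Ioo (-a) a, bbar < deriv D x ∧ deriv D x < b)
    (hDb : ∀ x ∈ Set.Ioo (-a) a, |D x| ≤ b * |x|)
    (hlogHolder : ∀ y ∈ Set.Ioo (-a) a, ∀ z ∈ Set.Ioo (-a) a,
      |Real.log (deriv D z) - Real.log (deriv D y)| ≤ k * |z - y| ^ ε) :
    (∀ x ∈ Set.Ioo (-a) a,
      Summable (fun j : ℕ => |Real.log (deriv D (D^[j] x)) - Real.log lam|)) ∧
    TendstoUniformlyOn
      (fun (n : ℕ) (x : ℝ) =>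
        ∑ j ∈ Finset.range n, (Real.log (deriv D (D^[j] x)) - Real.log lam))
      (fun x : ℝ => ∑' j : ℕ, (Real.log (deriv D (D^[j] x)) - Real.log lam))
      Filter.atTop (Set.Ioo (-a) a) ∧
    (∑' j : ℕ, (Real.log (deriv D (D^[j] (0 : ℝ))) - Real.log lam)) = 0 ∧
    (∀ x ∈ Set.Ioo (-a) a, ∀ y ∈ Set.Ioo (-a) a,
      |(∑' j : ℕ, (Real.log (deriv D (D^[j] y)) - Real.log lam)) -
        (∑' j : ℕ, (Real.log (deriv D (D^[j] x)) - Real.log lam))| ≤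
        (k / (1 - b ^ ε)) * |x - y| ^ ε) :=
  log_series_absolutely_uniformly_convergent_and_holder_general a ε hε D lam hD hD0 hlam bbar b k
    hbbar0 hbbarb hb1 hk hderivD hlogHolder
end

section
/- For every x ∈ (-a,a), the sequence λ^{-n} D^n(x) converges as n → ∞ and its limit equals h(x), i.e. h(x) = lim_{n→∞} λ^{-n} D^n(x) (Koenigs' algorithm). -/
/-!
The orbit `Dⁿ x` tends to `0`: its norms decrease to some `L`, and a cluster point `p` of the
orbit and its image `D p` both have norm `L`, which forces `p = 0` because `|D y| < |y|` off `0`.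
Iterating Schröder's equation gives `h (Dⁿ x) = λⁿ h x`, and `h y ~ y` at `0` since `h' 0 = 1`;
hence `Dⁿ x / λⁿ ~ h (Dⁿ x) / λⁿ = h x`.
-/

open Filter Topology Metric Asymptotics

section Contraction

variable {E : Type*} [NormedAddCommGroup E] {D : E → E} {a : ℝ}

lemma norm_apply_le_of_norm_lt (hD0 : D 0 = 0)
    (hcontract : ∀ y ∈ ball (0 : E) a, y ≠ 0 → ‖D y‖ < ‖y‖) :
    ∀ y ∈ ball (0 : E) a, ‖D y‖ ≤ ‖y‖ := by
  intro y hy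
  rcases eq_or_ne y 0 with rfl | hy0
  · simp [hD0]
  · exact (hcontract y hy hy0).le

lemma mapsTo_ball_of_norm_le (hle : ∀ y ∈ ball (0 : E) a, ‖D y‖ ≤ ‖y‖) :
    Set.MapsTo D (ball 0 a) (ball 0 a) := fun y hy =>
  mem_ball_zero_iff.2 ((hle y hy).trans_lt (mem_ball_zero_iff.1 hy))

lemma norm_iterate_le_norm (hle : ∀ y ∈ ball (0 : E) a, ‖D y‖ ≤ ‖y‖) {x : E}
    (hx : x ∈ ball 0 a) (n : ℕ) : ‖D^[n] x‖ ≤ ‖x‖ := by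
  induction n generalizing x with
  | zero => rfl
  | succ n ih =>
    rw [Function.iterate_succ_apply]
    exact (ih (mapsTo_ball_of_norm_le hle hx)).trans (hle x hx)

lemma antitone_norm_iterate (hle : ∀ y ∈ ball (0 : E) a, ‖D y‖ ≤ ‖y‖) {x : E}
    (hx : x ∈ ball 0 a) : Antitone fun n => ‖D^[n] x‖ :=
  antitone_nat_of_succ_le fun n => by
    rw [Function.iterate_succ_apply']
    exact hle _ ((mapsTo_ball_of_norm_le hle).iterate n hx)

theorem tendsto_iterate_nhds_zero [ProperSpace E] (hD : ContinuousOn D (ball 0 a))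
    (hD0 : D 0 = 0) (hcontract : ∀ y ∈ ball (0 : E) a, y ≠ 0 → ‖D y‖ < ‖y‖) {x : E}
    (hx : x ∈ ball 0 a) : Tendsto (fun n => D^[n] x) atTop (𝓝 0) := by
  have hle := norm_apply_le_of_norm_lt hD0 hcontract
  have hK : closedBall (0 : E) ‖x‖ ⊆ ball 0 a := closedBall_subset_ball (mem_ball_zero_iff.1 hx)
  have horbit : ∀ n, D^[n] x ∈ closedBall (0 : E) ‖x‖ := fun n =>
    mem_closedBall_zero_iff.2 (norm_iterate_le_norm hle hx n)
  have hL := tendsto_atTop_ciInf (antitone_norm_iterate hle hx)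
    ⟨0, by rintro _ ⟨n, rfl⟩; exact norm_nonneg _⟩
  set L := ⨅ n, ‖D^[n] x‖
  obtain ⟨p, hpK, φ, hφ, hp⟩ := (isCompact_closedBall (0 : E) ‖x‖).tendsto_subseq horbit
  have hnorm_p : ‖p‖ = L := tendsto_nhds_unique hp.norm (hL.comp hφ.tendsto_atTop)
  have hDp : Tendsto (fun n => D^[φ n + 1] x) atTop (𝓝 (D p)) := by
    simp_rw [Function.iterate_succ_apply']
    exact ((hD.continuousAt (isOpen_ball.mem_nhds (hK hpK))).tendsto).comp hp
  have hnorm_Dp : ‖D p‖ = L :=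
    tendsto_nhds_unique hDp.norm (hL.comp ((tendsto_add_atTop_nat 1).comp hφ.tendsto_atTop))
  have hp0 : p = 0 := by
    by_contra hp0
    exact (hcontract p (hK hpK) hp0).ne (hnorm_Dp.trans hnorm_p.symm)
  rw [tendsto_zero_iff_norm_tendsto_zero]
  rwa [← hnorm_p, hp0, norm_zero] at hL

end Contraction

section Koenigs

variable {𝕜 : Type*} [NontriviallyNormedField 𝕜]

lemma isEquivalent_id_of_hasDerivAt_one {h : 𝕜 → 𝕜} (hh : HasDerivAt h 1 0) (hh0 : h 0 = 0) :
    h ~[𝓝 0] id :=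
  (by simpa [hh0] using hh.isLittleO : (fun x => h x - x) =o[𝓝 0] fun x => x)

theorem tendsto_div_pow_of_apply_eq_pow_mul {h : 𝕜 → 𝕜} {u : ℕ → 𝕜} {lam c : 𝕜}
    (hh : HasDerivAt h 1 0) (hh0 : h 0 = 0) (hlam : lam ≠ 0)
    (hu : Tendsto u atTop (𝓝 0)) (hhu : ∀ n, h (u n) = lam ^ n * c) :
    Tendsto (fun n => u n / lam ^ n) atTop (𝓝 c) := by
  have hequiv : (fun n => h (u n) / lam ^ n) ~[atTop] fun n => u n / lam ^ n :=
    ((isEquivalent_id_of_hasDerivAt_one hh hh0).comp_tendsto hu).div IsEquivalent.refl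
  refine hequiv.tendsto_nhds (tendsto_const_nhds.congr fun n => ?_)
  rw [hhu, mul_div_cancel_left₀ _ (pow_ne_zero n hlam)]

lemma apply_iterate_eq_pow_mul {α M : Type*} [Monoid M] {D : α → α} {h : α → M} {s : Set α}
    {lam : M} (hD : Set.MapsTo D s s) (hSch : ∀ x ∈ s, h (D x) = lam * h x) {x : α} (hx : x ∈ s)
    (n : ℕ) : h (D^[n] x) = lam ^ n * h x := by
  induction n with
  | zero => simp
  | succ n ih =>
    rw [Function.iterate_succ_apply', hSch _ (hD.iterate n hx), ih, pow_succ', mul_assoc]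

end Koenigs

theorem koenigs_algorithm_general
    (a : ℝ) (D : ℝ → ℝ) (lam : ℝ)
    (hD : ContDiffOn ℝ 1 D (Set.Ioo (-a) a))
    (hD0 : D 0 = 0)
    (hlam0 : 0 < lam)
    (hcontract : ∀ x ∈ Set.Ioo (-a) a, x ≠ 0 → |D x| < |x|)
    (h : ℝ → ℝ)
    (hh : ContDiffOn ℝ 1 h (Set.Ioo (-a) a))
    (hh0 : h 0 = 0) (hh'0 : deriv h 0 = 1)
    (hSch : ∀ x ∈ Set.Ioo (-a) a, h (D x) = lam * h x) :
    ∀ x ∈ Set.Ioo (-a) a,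
      Filter.Tendsto (fun n : ℕ => D^[n] x / lam ^ n) Filter.atTop (nhds (h x)) := by
  simp only [← Real.ball_zero_eq_Ioo, ← Real.norm_eq_abs] at hD hcontract hh hSch ⊢
  intro x hx
  have hder : HasDerivAt h 1 0 := by
    have h0 : ball (0 : ℝ) a ∈ 𝓝 0 := isOpen_ball.mem_nhds (mem_ball_self (pos_of_mem_ball hx))
    rw [← hh'0]
    exact ((hh.contDiffAt h0).differentiableAt one_ne_zero).hasDerivAt
  have hmaps := mapsTo_ball_of_norm_le (norm_apply_le_of_norm_lt hD0 hcontract)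
  exact tendsto_div_pow_of_apply_eq_pow_mul hder hh0 hlam0.ne'
    (tendsto_iterate_nhds_zero hD.continuousOn hD0 hcontract hx)
    (apply_iterate_eq_pow_mul hmaps hSch hx)

/-- **Koenigs' algorithm.** For the conjugation `h` (the unique `C¹` solution of
Schröder's equation with `h 0 = 0`, `h' 0 = 1`), for every `x ∈ (-a,a)` the sequence
`λ^{-n} Dⁿ(x)` converges to `h x` as `n → ∞`. -/
theorem koenigs_algorithm
    (a ε : ℝ) (ha : 0 < a) (hε : 0 < ε) (D : ℝ → ℝ) (lam : ℝ)
    (hD : ContDiffOn ℝ 1 D (Set.Ioo (-a) a))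
    (hHolder : ∃ k > 0, ∀ y ∈ Set.Ioo (-a) a, ∀ z ∈ Set.Ioo (-a) a,
      |deriv D z - deriv D y| ≤ k * |z - y| ^ ε)
    (hD0 : D 0 = 0)
    (hlam : deriv D 0 = lam) (hlam0 : 0 < lam) (hlam1 : lam < 1)
    (hcontract : ∀ x ∈ Set.Ioo (-a) a, x ≠ 0 → |D x| < |x|)
    (h : ℝ → ℝ)
    (hh : ContDiffOn ℝ 1 h (Set.Ioo (-a) a))
    (hh0 : h 0 = 0) (hh'0 : deriv h 0 = 1)
    (hSch : ∀ x ∈ Set.Ioo (-a) a, h (D x) = lam * h x) :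
    ∀ x ∈ Set.Ioo (-a) a,
      Filter.Tendsto (fun n : ℕ => D^[n] x / lam ^ n) Filter.atTop (nhds (h x)) :=
  koenigs_algorithm_general a D lam hD hD0 hlam0 hcontract h hh hh0 hh'0 hSch
end

section
/- Let 0 < r, 0 < d < 1, B > 0, and let D₁, D₂ : [0,B] → ℝ be strictly increasing C² functions with D₁(0) = D₂(0) = 0, r ≤ Dᵢ'(x) ≤ d for all x ∈ [0,B] (i = 1,2), and D₁(B) ≤ D₂(B). Let g₁, g₂ : [0,B] → ℝ be C¹ functions satisfying Julia's equations gᵢ(Dᵢ(x)) = Dᵢ'(x) gᵢ(x) for all x ∈ [0,B] with Dᵢ(x) ∈ [0,B] (i = 1,2). Then, writing ‖·‖_∞ for the supremum norm over [0,B], sup_{s ∈ [0,D₁(B)]} |g₁(s) − g₂(s)| ≤ ‖g₁‖_∞ ( ‖D₁' − D₂'‖_∞ + (1/r) ‖D₂''‖_∞ ‖D₁ − D₂‖_∞ ) + (d/r) ‖g₂'‖_∞ ‖D₁ − D₂‖_∞ + d · sup_{x ∈ [0,B]} |g₁(x) − g₂(x)|. -/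
/-!
Write `s = D₁ x` with `x ∈ [0,B]`. Since `Dᵢ 0 = 0`, `Dᵢ` is monotone and `|Dᵢ'| ≤ 1`, both `Dᵢ`
map `[0,B]` into itself, so both Julia equations hold at `x`, and subtracting them gives
`g₁(D₁x) − g₂(D₁x) = (D₁'x − D₂'x) g₁x + D₂'x (g₁x − g₂x) + (g₂(D₂x) − g₂(D₁x))`.
The first two terms are bounded by suprema directly and the last by the mean value theorem
for `g₂`. This bound needs no term in `D₂''`; the stated one follows by adding nonnegative
terms and using `d / r ≥ 1`.
-/

open Set

theorem abs_le_iSup_abs_of_continuousOn {α : Type*} [TopologicalSpace α] {s : Set α}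
    {f : α → ℝ} (hs : IsCompact s) (hf : ContinuousOn f s) {x : α} (hx : x ∈ s) :
    |f x| ≤ ⨆ y : s, |f y| := by
  have hbdd := hs.bddAbove_image hf.abs
  rw [image_eq_range] at hbdd
  exact le_ciSup hbdd ⟨x, hx⟩

theorem abs_sub_le_iSup_abs_derivWithin_mul {a b : ℝ} {g : ℝ → ℝ} (hab : a < b)
    (hg : ContDiffOn ℝ 1 g (Icc a b)) {u v : ℝ} (hu : u ∈ Icc a b) (hv : v ∈ Icc a b) :
    |g u - g v| ≤ (⨆ y : Icc a b, |derivWithin g (Icc a b) y|) * |u - v| := by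
  have hg' : ContinuousOn (derivWithin g (Icc a b)) (Icc a b) :=
    hg.continuousOn_derivWithin (uniqueDiffOn_Icc hab) le_rfl
  exact (convex_Icc a b).norm_image_sub_le_of_norm_derivWithin_le
    (hg.differentiableOn one_ne_zero)
    (fun y hy => abs_le_iSup_abs_of_continuousOn isCompact_Icc hg' hy) hv hu

theorem mapsTo_Icc_of_abs_derivWithin_le_one {B : ℝ} {D : ℝ → ℝ} (hD0 : D 0 = 0)
    (hmono : MonotoneOn D (Icc 0 B)) (hD : DifferentiableOn ℝ D (Icc 0 B))
    (hD' : ∀ x ∈ Icc 0 B, |derivWithin D (Icc 0 B) x| ≤ 1) :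
    MapsTo D (Icc 0 B) (Icc 0 B) := by
  intro x hx
  have h0 : (0 : ℝ) ∈ Icc 0 B := ⟨le_rfl, hx.1.trans hx.2⟩
  have hlip := (convex_Icc (0 : ℝ) B).norm_image_sub_le_of_norm_derivWithin_le hD hD' h0 hx
  simp only [hD0, Real.norm_eq_abs, sub_zero, abs_of_nonneg hx.1, one_mul] at hlip
  have hDx : 0 ≤ D x := hD0 ▸ hmono h0 hx hx.1
  exact ⟨hDx, ((le_abs_self _).trans hlip).trans hx.2⟩

theorem abs_sub_le_of_julia {g₁ g₂ : ℝ → ℝ} {x u v a₁ a₂ : ℝ}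
    (h₁ : g₁ u = a₁ * g₁ x) (h₂ : g₂ v = a₂ * g₂ x) :
    |g₁ u - g₂ u| ≤ |a₁ - a₂| * |g₁ x| + |a₂| * |g₁ x - g₂ x| + |g₂ v - g₂ u| := by
  have hsplit : g₁ u - g₂ u = (a₁ - a₂) * g₁ x + a₂ * (g₁ x - g₂ x) + (g₂ v - g₂ u) := by
    linear_combination h₁ - h₂
  rw [hsplit, ← abs_mul, ← abs_mul]
  exact abs_add_three _ _ _

theorem julia_solutions_abs_sub_le {a b d : ℝ} {D₁ D₂ g₁ g₂ : ℝ → ℝ} (hab : a < b)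
    (hD₁ : ContDiffOn ℝ 1 D₁ (Icc a b)) (hD₂ : ContDiffOn ℝ 1 D₂ (Icc a b))
    (hg₁ : ContinuousOn g₁ (Icc a b)) (hg₂ : ContDiffOn ℝ 1 g₂ (Icc a b))
    {x : ℝ} (hx : x ∈ Icc a b) (hx₁ : D₁ x ∈ Icc a b) (hx₂ : D₂ x ∈ Icc a b)
    (hD₂x : |derivWithin D₂ (Icc a b) x| ≤ d)
    (hJ₁ : g₁ (D₁ x) = derivWithin D₁ (Icc a b) x * g₁ x)
    (hJ₂ : g₂ (D₂ x) = derivWithin D₂ (Icc a b) x * g₂ x) :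
    |g₁ (D₁ x) - g₂ (D₁ x)| ≤
      (⨆ y : Icc a b, |derivWithin D₁ (Icc a b) y - derivWithin D₂ (Icc a b) y|) *
          (⨆ y : Icc a b, |g₁ y|) +
        d * (⨆ y : Icc a b, |g₁ y - g₂ y|) +
        (⨆ y : Icc a b, |derivWithin g₂ (Icc a b) y|) * (⨆ y : Icc a b, |D₁ y - D₂ y|) := by
  have hI : UniqueDiffOn ℝ (Icc a b) := uniqueDiffOn_Icc hab
  have hsup : ∀ {f : ℝ → ℝ}, ContinuousOn f (Icc a b) → ∀ {y}, y ∈ Icc a b →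
      |f y| ≤ ⨆ z : Icc a b, |f z| :=
    fun hf _ hy => abs_le_iSup_abs_of_continuousOn isCompact_Icc hf hy
  have hD₁' := hD₁.continuousOn_derivWithin hI le_rfl
  have hD₂' := hD₂.continuousOn_derivWithin hI le_rfl
  calc _ ≤ _ := abs_sub_le_of_julia hJ₁ hJ₂
    _ ≤ _ := by
      gcongr
      · exact Real.iSup_nonneg fun _ => abs_nonneg _
      · exact hsup (hD₁'.sub hD₂') hx
      · exact hsup hg₁ hx
      · exact (abs_nonneg _).trans hD₂x
      · exact hsup (hg₁.sub hg₂.continuousOn) hx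
      · refine (abs_sub_le_iSup_abs_derivWithin_mul hab hg₂ hx₂ hx₁).trans ?_
        gcongr
        · exact Real.iSup_nonneg fun _ => abs_nonneg _
        · exact abs_sub_comm (D₁ x) (D₂ x) ▸ hsup (hD₁.continuousOn.sub hD₂.continuousOn) hx

theorem julia_solutions_stability_general
    (B r d : ℝ) (hB : 0 < B) (hr : 0 < r) (hd1 : d < 1)
    (D₁ D₂ g₁ g₂ : ℝ → ℝ)
    (hD₁mono : StrictMonoOn D₁ (Set.Icc 0 B)) (hD₂mono : StrictMonoOn D₂ (Set.Icc 0 B))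
    (hD₁ : ContDiffOn ℝ 2 D₁ (Set.Icc 0 B)) (hD₂ : ContDiffOn ℝ 2 D₂ (Set.Icc 0 B))
    (hD₁0 : D₁ 0 = 0) (hD₂0 : D₂ 0 = 0)
    (hD₁' : ∀ x ∈ Set.Icc 0 B,
      r ≤ derivWithin D₁ (Set.Icc 0 B) x ∧ derivWithin D₁ (Set.Icc 0 B) x ≤ d)
    (hD₂' : ∀ x ∈ Set.Icc 0 B,
      r ≤ derivWithin D₂ (Set.Icc 0 B) x ∧ derivWithin D₂ (Set.Icc 0 B) x ≤ d)
    (hg₁ : ContDiffOn ℝ 1 g₁ (Set.Icc 0 B)) (hg₂ : ContDiffOn ℝ 1 g₂ (Set.Icc 0 B))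
    (hJ₁ : ∀ x ∈ Set.Icc 0 B, D₁ x ∈ Set.Icc 0 B →
      g₁ (D₁ x) = derivWithin D₁ (Set.Icc 0 B) x * g₁ x)
    (hJ₂ : ∀ x ∈ Set.Icc 0 B, D₂ x ∈ Set.Icc 0 B →
      g₂ (D₂ x) = derivWithin D₂ (Set.Icc 0 B) x * g₂ x) :
    ∀ s ∈ Set.Icc 0 (D₁ B),
      |g₁ s - g₂ s| ≤
        (⨆ x : Set.Icc (0 : ℝ) B, |g₁ x|) *
          ((⨆ x : Set.Icc (0 : ℝ) B,
              |derivWithin D₁ (Set.Icc 0 B) x - derivWithin D₂ (Set.Icc 0 B) x|) +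
            (1 / r) *
              (⨆ x : Set.Icc (0 : ℝ) B,
                |derivWithin (derivWithin D₂ (Set.Icc 0 B)) (Set.Icc 0 B) x|) *
              (⨆ x : Set.Icc (0 : ℝ) B, |D₁ x - D₂ x|)) +
        (d / r) * (⨆ x : Set.Icc (0 : ℝ) B, |derivWithin g₂ (Set.Icc 0 B) x|) *
          (⨆ x : Set.Icc (0 : ℝ) B, |D₁ x - D₂ x|) +
        d * (⨆ x : Set.Icc (0 : ℝ) B, |g₁ x - g₂ x|) := by
  intro s hs
  have h0 : (0 : ℝ) ∈ Set.Icc 0 B := ⟨le_rfl, hB.le⟩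
  have hrd : r ≤ d := (hD₁' 0 h0).1.trans (hD₁' 0 h0).2
  have habs : ∀ D : ℝ → ℝ, (∀ x ∈ Set.Icc 0 B, r ≤ derivWithin D (Set.Icc 0 B) x ∧
      derivWithin D (Set.Icc 0 B) x ≤ d) → ∀ x ∈ Set.Icc 0 B, |derivWithin D (Set.Icc 0 B) x| ≤ d :=
    fun D hD x hx => abs_le.2 ⟨by linarith [hD x hx], (hD x hx).2⟩
  have hmaps₁ := mapsTo_Icc_of_abs_derivWithin_le_one hD₁0 hD₁mono.monotoneOn
    (hD₁.differentiableOn two_ne_zero) fun x hx => (habs D₁ hD₁' x hx).trans hd1.le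
  have hmaps₂ := mapsTo_Icc_of_abs_derivWithin_le_one hD₂0 hD₂mono.monotoneOn
    (hD₂.differentiableOn two_ne_zero) fun x hx => (habs D₂ hD₂' x hx).trans hd1.le
  obtain ⟨x, hx, rfl⟩ := intermediate_value_Icc hB.le hD₁.continuousOn (hD₁0 ▸ hs)
  refine (julia_solutions_abs_sub_le hB (hD₁.of_le one_le_two) (hD₂.of_le one_le_two)
    hg₁.continuousOn hg₂ hx (hmaps₁ hx) (hmaps₂ hx) (habs D₂ hD₂' x hx)
    (hJ₁ x hx (hmaps₁ hx)) (hJ₂ x hx (hmaps₂ hx))).trans ?_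
  have hS : ∀ f : Set.Icc (0 : ℝ) B → ℝ, 0 ≤ ⨆ y, |f y| :=
    fun f => Real.iSup_nonneg fun y => abs_nonneg (f y)
  have hweaken : ∀ {A G E P Δ S : ℝ}, 0 ≤ G → 0 ≤ P → 0 ≤ Δ → 0 ≤ S →
      A * G + d * E + P * Δ ≤ G * (A + 1 / r * S * Δ) + d / r * P * Δ + d * E := by
    intro A G E P Δ S hG hP hΔ hS₀
    have hPΔ : P * Δ ≤ d / r * P * Δ := by
      rw [mul_assoc]; exact le_mul_of_one_le_left (by positivity) ((one_le_div hr).2 hrd)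
    nlinarith [mul_nonneg hG (mul_nonneg (mul_nonneg (one_div_nonneg.2 hr.le) hS₀) hΔ)]
  exact hweaken (hS _) (hS _) (hS _) (hS _)

/-- **Stability estimate (Lemma 4.2 of the paper).** Let `D₁, D₂ : [0,B] → ℝ` be
strictly increasing `C²` functions with `Dᵢ 0 = 0`, `r ≤ Dᵢ' ≤ d` on `[0,B]` and
`D₁ B ≤ D₂ B`, and let `g₁, g₂` be `C¹` solutions of the respective Julia equations
`gᵢ(Dᵢ(x)) = Dᵢ'(x) gᵢ(x)`.  Then
`sup_{s ∈ [0,D₁ B]} |g₁ s − g₂ s| ≤ ‖g₁‖_∞ (‖D₁' − D₂'‖_∞ + (1/r)‖D₂''‖_∞‖D₁ − D₂‖_∞)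
  + (d/r)‖g₂'‖_∞‖D₁ − D₂‖_∞ + d ⬝ sup_{[0,B]} |g₁ − g₂|`. -/
theorem julia_solutions_stability
    (B r d : ℝ) (hB : 0 < B) (hr : 0 < r) (hd0 : 0 < d) (hd1 : d < 1)
    (D₁ D₂ g₁ g₂ : ℝ → ℝ)
    (hD₁mono : StrictMonoOn D₁ (Set.Icc 0 B)) (hD₂mono : StrictMonoOn D₂ (Set.Icc 0 B))
    (hD₁ : ContDiffOn ℝ 2 D₁ (Set.Icc 0 B)) (hD₂ : ContDiffOn ℝ 2 D₂ (Set.Icc 0 B))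
    (hD₁0 : D₁ 0 = 0) (hD₂0 : D₂ 0 = 0)
    (hD₁' : ∀ x ∈ Set.Icc 0 B,
      r ≤ derivWithin D₁ (Set.Icc 0 B) x ∧ derivWithin D₁ (Set.Icc 0 B) x ≤ d)
    (hD₂' : ∀ x ∈ Set.Icc 0 B,
      r ≤ derivWithin D₂ (Set.Icc 0 B) x ∧ derivWithin D₂ (Set.Icc 0 B) x ≤ d)
    (hDB : D₁ B ≤ D₂ B)
    (hg₁ : ContDiffOn ℝ 1 g₁ (Set.Icc 0 B)) (hg₂ : ContDiffOn ℝ 1 g₂ (Set.Icc 0 B))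
    (hJ₁ : ∀ x ∈ Set.Icc 0 B, D₁ x ∈ Set.Icc 0 B →
      g₁ (D₁ x) = derivWithin D₁ (Set.Icc 0 B) x * g₁ x)
    (hJ₂ : ∀ x ∈ Set.Icc 0 B, D₂ x ∈ Set.Icc 0 B →
      g₂ (D₂ x) = derivWithin D₂ (Set.Icc 0 B) x * g₂ x) :
    ∀ s ∈ Set.Icc 0 (D₁ B),
      |g₁ s - g₂ s| ≤
        (⨆ x : Set.Icc (0 : ℝ) B, |g₁ x|) *
          ((⨆ x : Set.Icc (0 : ℝ) B,
              |derivWithin D₁ (Set.Icc 0 B) x - derivWithin D₂ (Set.Icc 0 B) x|) +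
            (1 / r) *
              (⨆ x : Set.Icc (0 : ℝ) B,
                |derivWithin (derivWithin D₂ (Set.Icc 0 B)) (Set.Icc 0 B) x|) *
              (⨆ x : Set.Icc (0 : ℝ) B, |D₁ x - D₂ x|)) +
        (d / r) * (⨆ x : Set.Icc (0 : ℝ) B, |derivWithin g₂ (Set.Icc 0 B) x|) *
          (⨆ x : Set.Icc (0 : ℝ) B, |D₁ x - D₂ x|) +
        d * (⨆ x : Set.Icc (0 : ℝ) B, |g₁ x - g₂ x|) :=
  julia_solutions_stability_general B r d hB hr hd1 D₁ D₂ g₁ g₂ hD₁mono hD₂mono hD₁ hD₂ hD₁0 hD₂0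
    hD₁' hD₂' hg₁ hg₂ hJ₁ hJ₂
end

section
/- If g̃ : (-a,a) → ℝ satisfies Julia's equation g̃(D(x)) = D'(x) g̃(x) for all x ∈ (-a,a) and g̃ is differentiable at 0, then g̃(x) = g̃'(0) · h(x)/h'(x) for all x ∈ (-a,a). -/
/-!
Differentiating Schröder's equation gives `h'(D x) D'(x) = λ h'(x)`; together with Julia's
equation this makes `g h' / h` invariant under `D`. Since `h` is strictly increasing and
`h (Dⁿ x) = λⁿ h x → 0`, the orbit `Dⁿ x` tends to `0`, where `g h' / h` tends to
`g'(0) h'(0) / h'(0) = g'(0)` because `g(0) = h(0) = 0` (both are fixed by multiplication by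
`λ ≠ 1`). Hence `g h' / h` is the constant `g'(0)` on `(-a, a) \ {0}`.
-/

open Set Filter Topology

section StrictMonoOn

variable {ι α β : Type*} [LinearOrder α] [TopologicalSpace α] [OrderTopology α] [DenselyOrdered α]
  [LinearOrder β] [TopologicalSpace β] [OrderTopology β]

theorem StrictMonoOn.eventually_lt_of_tendsto_comp {f : α → β} {s : Set α} {c b : α}
    {u : ι → α} {l : Filter ι} (hf : StrictMonoOn f s) (hs : s ∈ 𝓝 c) (hu : ∀ i, u i ∈ s)
    (hfu : Tendsto (f ∘ u) l (𝓝 (f c))) (hb : b < c) : ∀ᶠ i in l, b < u i := by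
  obtain ⟨l', ⟨hbl', hl'c⟩, hsub⟩ := exists_Ioc_subset_of_mem_nhds' hs hb
  obtain ⟨b', hl'b', hb'c⟩ := exists_between hl'c
  have hb's : b' ∈ s := hsub ⟨hl'b', hb'c.le⟩
  filter_upwards [(tendsto_order.1 hfu).1 (f b') (hf hb's (mem_of_mem_nhds hs) hb'c)] with i hi
  exact hbl'.trans_lt (hl'b'.trans ((hf.lt_iff_lt hb's (hu i)).1 hi))

theorem StrictMonoOn.tendsto_of_tendsto_comp {f : α → β} {s : Set α} {c : α}
    {u : ι → α} {l : Filter ι} (hf : StrictMonoOn f s) (hs : s ∈ 𝓝 c) (hu : ∀ i, u i ∈ s)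
    (hfu : Tendsto (f ∘ u) l (𝓝 (f c))) : Tendsto u l (𝓝 c) :=
  tendsto_order.2 ⟨fun _ hb => hf.eventually_lt_of_tendsto_comp hs hu hfu hb,
    fun _ hb => hf.dual.eventually_lt_of_tendsto_comp (α := αᵒᵈ) (β := βᵒᵈ) hs hu hfu hb⟩

end StrictMonoOn

theorem tendsto_mul_div_nhdsNE_of_hasDerivAt {g k h : ℝ → ℝ} {g' h' c : ℝ}
    (hg : HasDerivAt g g' c) (hgc : g c = 0) (hh : HasDerivAt h h' c) (hhc : h c = 0)
    (hh' : h' ≠ 0) (hk : ContinuousAt k c) :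
    Tendsto (fun z => g z * k z / h z) (𝓝[≠] c) (𝓝 (g' * k c / h')) := by
  have hslope := ((hasDerivAt_iff_tendsto_slope.1 hg).mul
    (hk.tendsto.mono_left nhdsWithin_le_nhds)).div (hasDerivAt_iff_tendsto_slope.1 hh) hh'
  refine hslope.congr' ?_
  filter_upwards [self_mem_nhdsWithin] with z hz
  simp only [Pi.div_apply, slope_def_field, hgc, hhc, sub_zero]
  rw [div_mul_eq_mul_div, div_div_div_cancel_right₀ (sub_ne_zero.2 hz)]

theorem iterate_apply_eq_pow_mul {α M : Type*} [Monoid M] {s : Set α} {D : α → α} {φ : α → M}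
    {c : M} (hD : MapsTo D s s) (hφ : ∀ z ∈ s, φ (D z) = c * φ z) {z : α} (hz : z ∈ s) (n : ℕ) :
    φ (D^[n] z) = c ^ n * φ z := by
  induction n with
  | zero => simp
  | succ n ih =>
    rw [Function.iterate_succ_apply', hφ _ (hD.iterate n hz), ih, pow_succ', mul_assoc]

theorem mapsTo_Ioo_of_abs_lt_abs {a : ℝ} {D : ℝ → ℝ} (hD0 : D 0 = 0)
    (hcontract : ∀ x ∈ Ioo (-a) a, x ≠ 0 → |D x| < |x|) : MapsTo D (Ioo (-a) a) (Ioo (-a) a) := by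
  intro x hx
  rcases eq_or_ne x 0 with rfl | hx0
  · rwa [hD0]
  · exact abs_lt.1 ((hcontract x hx hx0).trans (abs_lt.2 hx))

theorem mul_deriv_div_comp_eq_of_julia {D h g : ℝ → ℝ} {lam z : ℝ} (hlam : lam ≠ 0)
    (hD : DifferentiableAt ℝ D z) (hh : DifferentiableAt ℝ h (D z))
    (hSch : ∀ᶠ x in 𝓝 z, h (D x) = lam * h x) (hg : g (D z) = deriv D z * g z) :
    g (D z) * deriv h (D z) / h (D z) = g z * deriv h z / h z := by
  have hchain : deriv h (D z) * deriv D z = lam * deriv h z := by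
    rw [← deriv_comp z hh hD, Function.comp_def, Filter.EventuallyEq.deriv_eq hSch,
      deriv_const_mul_field']
  rw [hg, hSch.self_of_nhds, ← mul_div_mul_left _ (h z) hlam]
  linear_combination (g z / (lam * h z)) * hchain

theorem tendsto_iterate_nhdsNE_of_schroeder {s : Set ℝ} {D h : ℝ → ℝ} {lam x : ℝ}
    (hD : MapsTo D s s) (hs : s ∈ 𝓝 0) (hmono : StrictMonoOn h s) (hh0 : h 0 = 0)
    (hSch : ∀ z ∈ s, h (D z) = lam * h z) (hlam0 : 0 < lam) (hlam1 : lam < 1)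
    (hx : x ∈ s) (hx0 : x ≠ 0) :
    Tendsto (fun n => D^[n] x) atTop (𝓝[≠] 0) := by
  have horbit := iterate_apply_eq_pow_mul hD hSch hx
  have hhx : h x ≠ 0 := hh0 ▸ hmono.injOn.ne hx (mem_of_mem_nhds hs) hx0
  refine tendsto_nhdsWithin_of_tendsto_nhds_of_eventually_within _ ?_
    (Eventually.of_forall fun n => ?_)
  · refine hmono.tendsto_of_tendsto_comp hs (fun n => hD.iterate n hx) ?_
    have hpow := (tendsto_pow_atTop_nhds_zero_of_lt_one hlam0.le hlam1).mul_const (h x)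
    rw [zero_mul, ← hh0] at hpow
    exact hpow.congr fun n => (horbit n).symm
  · intro hn
    have := horbit n
    rw [show D^[n] x = 0 from hn, hh0] at this
    exact mul_ne_zero (pow_ne_zero n hlam0.ne') hhx this.symm

theorem julia_solution_unique_up_to_constant_general
    (a : ℝ) (D : ℝ → ℝ) (lam : ℝ)
    (hD : ContDiffOn ℝ 1 D (Set.Ioo (-a) a))
    (hD0 : D 0 = 0)
    (hlam : deriv D 0 = lam) (hlam0 : 0 < lam) (hlam1 : lam < 1)
    (hcontract : ∀ x ∈ Set.Ioo (-a) a, x ≠ 0 → |D x| < |x|)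
    (h : ℝ → ℝ)
    (hh : ContDiffOn ℝ 1 h (Set.Ioo (-a) a))
    (hh'pos : ∀ x ∈ Set.Ioo (-a) a, 0 < deriv h x)
    (hSch : ∀ x ∈ Set.Ioo (-a) a, h (D x) = lam * h x)
    (gt : ℝ → ℝ)
    (hgt : ∀ x ∈ Set.Ioo (-a) a, gt (D x) = deriv D x * gt x)
    (hgtdiff : DifferentiableAt ℝ gt 0) :
    ∀ x ∈ Set.Ioo (-a) a, gt x = deriv gt 0 * (h x / deriv h x) := by
  intro x hx
  have ha : 0 < a := neg_lt_self_iff.1 (hx.1.trans hx.2)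
  have hS : Ioo (-a) a ∈ 𝓝 0 := Ioo_mem_nhds (neg_lt_zero.2 ha) ha
  have h0S : (0 : ℝ) ∈ Ioo (-a) a := mem_of_mem_nhds hS
  have hmaps := mapsTo_Ioo_of_abs_lt_abs hD0 hcontract
  have hhdiff : ∀ z ∈ Ioo (-a) a, DifferentiableAt ℝ h z := fun z hz =>
    differentiableAt_of_deriv_ne_zero (hh'pos z hz).ne'
  have hh0 : h 0 = 0 := (mul_left_eq_self₀.1 (hD0 ▸ hSch 0 h0S).symm).resolve_left hlam1.ne
  have hgt0 : gt 0 = 0 :=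
    (mul_left_eq_self₀.1 (hD0 ▸ hlam ▸ hgt 0 h0S).symm).resolve_left hlam1.ne
  rcases eq_or_ne x 0 with rfl | hx0
  · simp [hgt0, hh0]
  have hmono : StrictMonoOn h (Ioo (-a) a) :=
    strictMonoOn_of_deriv_pos (convex_Ioo _ _) hh.continuousOn (by simpa using hh'pos)
  have hinv : ∀ z ∈ Ioo (-a) a,
      gt (D z) * deriv h (D z) / h (D z) = 1 * (gt z * deriv h z / h z) := fun z hz => by
    rw [one_mul]
    exact mul_deriv_div_comp_eq_of_julia hlam0.ne'
      ((hD.differentiableOn one_ne_zero z hz).differentiableAt (isOpen_Ioo.mem_nhds hz))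
      (hhdiff _ (hmaps hz)) (eventually_of_mem (isOpen_Ioo.mem_nhds hz) hSch) (hgt z hz)
  have hlim := tendsto_mul_div_nhdsNE_of_hasDerivAt hgtdiff.hasDerivAt hgt0
    (hhdiff 0 h0S).hasDerivAt hh0 (hh'pos 0 h0S).ne'
    ((hh.continuousOn_deriv_of_isOpen isOpen_Ioo le_rfl).continuousAt hS)
  have hratio : gt x * deriv h x / h x = deriv gt 0 * deriv h 0 / deriv h 0 := by
    refine tendsto_nhds_unique (tendsto_const_nhds.congr fun n => ?_) (hlim.comp
      (tendsto_iterate_nhdsNE_of_schroeder hmaps hS hmono hh0 hSch hlam0 hlam1 hx hx0))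
    simpa using
      (iterate_apply_eq_pow_mul (φ := fun z => gt z * deriv h z / h z) hmaps hinv hx n).symm
  have hhx : h x ≠ 0 := hh0 ▸ hmono.injOn.ne hx h0S hx0
  rw [mul_div_cancel_right₀ _ (hh'pos 0 h0S).ne'] at hratio
  rw [← hratio, div_mul_div_cancel₀ hhx, mul_div_cancel_right₀ _ (hh'pos x hx).ne']

/-- **Proposition 2.2.** If `g̃` satisfies Julia's equation `g̃(D x) = D'(x) g̃(x)` on
`(-a,a)` and is differentiable at `0`, then `g̃ x = g̃'(0) · h x / h' x` on `(-a,a)`,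
where `h` is the conjugation solving Schröder's equation. -/
theorem julia_solution_unique_up_to_constant
    (a ε : ℝ) (ha : 0 < a) (hε : 0 < ε) (D : ℝ → ℝ) (lam : ℝ)
    (hD : ContDiffOn ℝ 1 D (Set.Ioo (-a) a))
    (hHolder : ∃ k > 0, ∀ y ∈ Set.Ioo (-a) a, ∀ z ∈ Set.Ioo (-a) a,
      |deriv D z - deriv D y| ≤ k * |z - y| ^ ε)
    (hD0 : D 0 = 0)
    (hlam : deriv D 0 = lam) (hlam0 : 0 < lam) (hlam1 : lam < 1)
    (hcontract : ∀ x ∈ Set.Ioo (-a) a, x ≠ 0 → |D x| < |x|)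
    (h : ℝ → ℝ)
    (hh : ContDiffOn ℝ 1 h (Set.Ioo (-a) a))
    (hh0 : h 0 = 0) (hh'0 : deriv h 0 = 1)
    (hh'pos : ∀ x ∈ Set.Ioo (-a) a, 0 < deriv h x)
    (hSch : ∀ x ∈ Set.Ioo (-a) a, h (D x) = lam * h x)
    (gt : ℝ → ℝ)
    (hgt : ∀ x ∈ Set.Ioo (-a) a, gt (D x) = deriv D x * gt x)
    (hgtdiff : DifferentiableAt ℝ gt 0) :
    ∀ x ∈ Set.Ioo (-a) a, gt x = deriv gt 0 * (h x / deriv h x) :=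
  julia_solution_unique_up_to_constant_general a D lam hD hD0 hlam hlam0 hlam1 hcontract h hh hh'pos
    hSch gt hgt hgtdiff
end

section
/- Assume additionally that D(x) ≠ 0 for every x ∈ (-a,a) with x ≠ 0. Define ρ(y) = D(y)/(D'(y)·y) for y ≠ 0 and ρ(0) = 1. Then for every x ∈ (-a,a), the infinite product ∏_{n=0}^{∞} ρ(D^n(x)) converges and g(x) := h(x)/h'(x) satisfies g(x) = x · ∏_{n=0}^{∞} ρ(D^n(x)). -/
/-!
Differentiating Schröder's equation gives `h'(D y) D'(y) = λ h'(y)`, so `g = h / h'` solves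
Julia's equation `g (D y) = D'(y) g(y)`. Hence `ρ(y) = F(D y) / F(y)` with `F(y) = y / g(y)`,
the partial products telescope to `F(Dⁿ x) / F(x)`, and `F(Dⁿ x) → 1`: indeed `Dⁿ x → 0`
because `h(Dⁿ x) = λⁿ h(x) → 0` with `h` strictly increasing, and `F(y) = (y / h(y)) h'(y) → 1`.
-/

open Filter Topology Set Function Finset

theorem StrictMonoOn.tendsto_of_tendsto_comp_s11 {α β γ : Type*} [LinearOrder α]
    [TopologicalSpace α] [OrderTopology α] [DenselyOrdered α] [Preorder β] [TopologicalSpace β]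
    [OrderTopology β] {f : α → β} {s : Set α} {y : α} (hf : StrictMonoOn f s) (hs : s ∈ 𝓝 y)
    {l : Filter γ} {u : γ → α} (hus : ∀ᶠ n in l, u n ∈ s)
    (hfu : Tendsto (f ∘ u) l (𝓝 (f y))) :
    Tendsto u l (𝓝 y) := by
  have hy : y ∈ s := mem_of_mem_nhds hs
  refine tendsto_order.2 ⟨fun b hb => ?_, fun b hb => ?_⟩
  · obtain ⟨l', hl', hsub⟩ := exists_Ioc_subset_of_mem_nhds' hs hb
    obtain ⟨c, hl'c, hcy⟩ := exists_between hl'.2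
    have hc : c ∈ s := hsub ⟨hl'c, hcy.le⟩
    filter_upwards [hus, (tendsto_order.1 hfu).1 _ (hf hc hy hcy)] with n hn hfn
    by_contra! hnb
    exact (hf.monotoneOn hn hc (hnb.trans (hl'.1.trans hl'c.le))).not_gt hfn
  · obtain ⟨r', hr', hsub⟩ := exists_Ico_subset_of_mem_nhds' hs hb
    obtain ⟨c, hyc, hcr'⟩ := exists_between hr'.1
    have hc : c ∈ s := hsub ⟨hyc.le, hcr'⟩
    filter_upwards [hus, (tendsto_order.1 hfu).2 _ (hf hy hc hyc)] with n hn hfn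
    by_contra! hbn
    exact (hf.monotoneOn hc hn ((hcr'.trans_le hr'.2).le.trans hbn)).not_gt hfn

theorem prod_range_div_deriv_mul_iterate {t : Set ℝ} {D g : ℝ → ℝ} (hDt : MapsTo D t t)
    (hJ : ∀ y ∈ t, g (D y) = deriv D y * g y) (hg : ∀ y ∈ t, g y ≠ 0) (ht : (0 : ℝ) ∉ t)
    {x : ℝ} (hx : x ∈ t) (n : ℕ) :
    ∏ j ∈ range n, D (D^[j] x) / (deriv D (D^[j] x) * D^[j] x)
      = D^[n] x / g (D^[n] x) / (x / g x) := by
  induction n with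
  | zero =>
    have : x / g x ≠ 0 := div_ne_zero (ne_of_mem_of_not_mem hx ht) (hg x hx)
    simp [this]
  | succ n ih =>
    have hy := hDt.iterate n hx
    rw [prod_range_succ, ih, iterate_succ_apply', hJ _ hy]
    field_simp [hg _ hy, ne_of_mem_of_not_mem hy ht]

section Schroder

variable {s : Set ℝ} {D h : ℝ → ℝ} {lam : ℝ}

theorem deriv_comp_mul_deriv_of_schroder (hs : IsOpen s) (hD : DifferentiableOn ℝ D s)
    (hh : DifferentiableOn ℝ h s) (hDs : MapsTo D s s) (hSch : ∀ x ∈ s, h (D x) = lam * h x)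
    {y : ℝ} (hy : y ∈ s) : deriv h (D y) * deriv D y = lam * deriv h y := by
  have hcomp : HasDerivAt (h ∘ D) (deriv h (D y) * deriv D y) y :=
    (hh.differentiableAt (hs.mem_nhds (hDs hy))).hasDerivAt.comp y
      (hD.differentiableAt (hs.mem_nhds hy)).hasDerivAt
  have hEq : (fun x => lam * h x) =ᶠ[𝓝 y] h ∘ D :=
    eventually_of_mem (hs.mem_nhds hy) fun x hx => (hSch x hx).symm
  exact (hcomp.congr_of_eventuallyEq hEq).unique
    ((hh.differentiableAt (hs.mem_nhds hy)).hasDerivAt.const_mul lam)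

theorem julia_equation (hs : IsOpen s) (hD : DifferentiableOn ℝ D s)
    (hh : DifferentiableOn ℝ h s) (hDs : MapsTo D s s) (hSch : ∀ x ∈ s, h (D x) = lam * h x)
    (hh' : ∀ x ∈ s, deriv h x ≠ 0) {y : ℝ} (hy : y ∈ s) :
    h (D y) / deriv h (D y) = deriv D y * (h y / deriv h y) := by
  have hchain := deriv_comp_mul_deriv_of_schroder hs hD hh hDs hSch hy
  rw [hSch y hy]
  field_simp [hh' y hy, hh' (D y) (hDs hy)]
  linear_combination -(h y) * hchain

theorem apply_iterate_of_schroder (hDs : MapsTo D s s) (hSch : ∀ x ∈ s, h (D x) = lam * h x)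
    {x : ℝ} (hx : x ∈ s) (n : ℕ) : h (D^[n] x) = lam ^ n * h x := by
  induction n with
  | zero => simp
  | succ n ih => rw [iterate_succ_apply', hSch _ (hDs.iterate n hx), ih, pow_succ']; ring

theorem mapsTo_diff_zero_of_schroder (hDs : MapsTo D s s) (hSch : ∀ x ∈ s, h (D x) = lam * h x)
    (hinj : InjOn h s) (h0 : 0 ∈ s) (hh0 : h 0 = 0) (hlam : lam ≠ 0) :
    MapsTo D (s \ {0}) (s \ {0}) := by
  rintro y ⟨hy, hy0 : y ≠ 0⟩
  refine ⟨hDs hy, fun hDy0 => hy0 (hinj hy h0 ?_)⟩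
  have hDy0 : D y = 0 := hDy0
  simpa [hDy0, hh0, hlam] using (hSch y hy).symm

theorem tendsto_iterate_of_schroder (hmono : StrictMonoOn h s) (hs : s ∈ 𝓝 0)
    (hDs : MapsTo D s s) (hSch : ∀ x ∈ s, h (D x) = lam * h x) (hh0 : h 0 = 0)
    (hlam : |lam| < 1) {x : ℝ} (hx : x ∈ s) :
    Tendsto (fun n => D^[n] x) atTop (𝓝 0) := by
  refine hmono.tendsto_of_tendsto_comp_s11 hs (Eventually.of_forall fun n => hDs.iterate n hx) ?_
  rw [show h ∘ (fun n => D^[n] x) = fun n => lam ^ n * h x from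
    funext (apply_iterate_of_schroder hDs hSch hx), hh0]
  simpa using (tendsto_pow_atTop_nhds_zero_of_abs_lt_one hlam).mul_const (h x)

end Schroder

theorem tendsto_div_div_deriv {h : ℝ → ℝ} (hd : HasDerivAt h 1 0)
    (hc : ContinuousAt (deriv h) 0) (hh0 : h 0 = 0) :
    Tendsto (fun y => y / (h y / deriv h y)) (𝓝[≠] 0) (𝓝 1) := by
  have hslope : Tendsto (fun y => h y / y) (𝓝[≠] 0) (𝓝 1) :=
    (hasDerivAt_iff_tendsto_slope.mp hd).congr fun y => by simp [slope_def_field, hh0]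
  have hderiv : Tendsto (deriv h) (𝓝[≠] 0) (𝓝 1) :=
    hd.deriv ▸ hc.tendsto.mono_left nhdsWithin_le_nhds
  simpa [div_div_eq_mul_div, div_mul_eq_mul_div] using (hslope.inv₀ one_ne_zero).mul hderiv

theorem mapsTo_Ioo_of_abs_lt {D : ℝ → ℝ} {a : ℝ} (hD0 : D 0 = 0)
    (hcontract : ∀ x ∈ Ioo (-a) a, x ≠ 0 → |D x| < |x|) :
    MapsTo D (Ioo (-a) a) (Ioo (-a) a) := by
  intro y hy
  rcases eq_or_ne y 0 with rfl | hy0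
  · rwa [hD0]
  · exact abs_lt.1 ((hcontract y hy hy0).trans (abs_lt.2 hy))

theorem julia_solution_as_infinite_product_general
    (a : ℝ) (D : ℝ → ℝ) (lam : ℝ)
    (hD : ContDiffOn ℝ 1 D (Set.Ioo (-a) a))
    (hD0 : D 0 = 0)
    (hlam0 : 0 < lam) (hlam1 : lam < 1)
    (hcontract : ∀ x ∈ Set.Ioo (-a) a, x ≠ 0 → |D x| < |x|)
    (h : ℝ → ℝ)
    (hh : ContDiffOn ℝ 1 h (Set.Ioo (-a) a))
    (hh0 : h 0 = 0) (hh'0 : deriv h 0 = 1)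
    (hh'pos : ∀ x ∈ Set.Ioo (-a) a, 0 < deriv h x)
    (hSch : ∀ x ∈ Set.Ioo (-a) a, h (D x) = lam * h x)
    (rho : ℝ → ℝ)
    (hrho : ∀ y : ℝ, rho y = if y = 0 then 1 else D y / (deriv D y * y)) :
    ∀ x ∈ Set.Ioo (-a) a, ∃ L : ℝ,
      Filter.Tendsto (fun n : ℕ => ∏ j ∈ Finset.range n, rho (D^[j] x))
        Filter.atTop (nhds L) ∧
      h x / deriv h x = x * L := by
  intro x hx
  rcases eq_or_ne x 0 with rfl | hx0
  · exact ⟨1, by simp [iterate_fixed hD0, hrho], by simp [hh0]⟩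
  set s := Ioo (-a) a
  have h0 : (0 : ℝ) ∈ s := ⟨by linarith [hx.1, hx.2], by linarith [hx.1, hx.2]⟩
  have hs0 : s ∈ 𝓝 0 := isOpen_Ioo.mem_nhds h0
  have hmono : StrictMonoOn h s :=
    strictMonoOn_of_deriv_pos (convex_Ioo _ _) hh.continuousOn (by rwa [interior_Ioo])
  have hDs := mapsTo_Ioo_of_abs_lt hD0 hcontract
  have hDt := mapsTo_diff_zero_of_schroder hDs hSch hmono.injOn h0 hh0 hlam0.ne'
  have hxt : x ∈ s \ {0} := ⟨hx, hx0⟩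
  have hg (y : ℝ) (hy : y ∈ s \ {0}) : h y / deriv h y ≠ 0 :=
    div_ne_zero (hh0 ▸ hmono.injOn.ne hy.1 h0 hy.2) (hh'pos y hy.1).ne'
  have hJ (y : ℝ) (hy : y ∈ s \ {0}) :=
    julia_equation isOpen_Ioo (hD.differentiableOn one_ne_zero) (hh.differentiableOn one_ne_zero)
      hDs hSch (fun y hy => (hh'pos y hy).ne') hy.1
  have hprod (n : ℕ) : ∏ j ∈ range n, rho (D^[j] x)
      = D^[n] x / (h (D^[n] x) / deriv h (D^[n] x)) / (x / (h x / deriv h x)) := by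
    rw [← prod_range_div_deriv_mul_iterate hDt hJ hg (by simp) hxt]
    exact prod_congr rfl fun j _ => by rw [hrho, if_neg (by simpa using (hDt.iterate j hxt).2)]
  have horbit : Tendsto (fun n => D^[n] x) atTop (𝓝[≠] 0) :=
    tendsto_nhdsWithin_iff.2
      ⟨tendsto_iterate_of_schroder hmono hs0 hDs hSch hh0 (abs_lt.2 ⟨by linarith, hlam1⟩) hx,
        Eventually.of_forall fun n => (hDt.iterate n hxt).2⟩
  have hratio := tendsto_div_div_deriv (hh'0 ▸ (hh.differentiableOn one_ne_zero).hasDerivAt hs0)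
    ((hh.continuousOn_deriv_of_isOpen isOpen_Ioo le_rfl).continuousAt hs0) hh0
  refine ⟨h x / deriv h x / x, ?_, by field_simp⟩
  simpa [funext hprod] using (hratio.comp horbit).div_const (x / (h x / deriv h x))

/-- Assume additionally `D x ≠ 0` for `x ≠ 0` in `(-a,a)`.  With
`ρ(y) = D(y)/(D'(y)·y)` for `y ≠ 0` and `ρ(0) = 1`, for every `x ∈ (-a,a)` the
infinite product `∏_{n=0}^∞ ρ(Dⁿ(x))` converges and
`g(x) := h(x)/h'(x) = x · ∏_{n=0}^∞ ρ(Dⁿ(x))`. -/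
theorem julia_solution_as_infinite_product
    (a ε : ℝ) (ha : 0 < a) (hε : 0 < ε) (D : ℝ → ℝ) (lam : ℝ)
    (hD : ContDiffOn ℝ 1 D (Set.Ioo (-a) a))
    (hHolder : ∃ k > 0, ∀ y ∈ Set.Ioo (-a) a, ∀ z ∈ Set.Ioo (-a) a,
      |deriv D z - deriv D y| ≤ k * |z - y| ^ ε)
    (hD0 : D 0 = 0)
    (hlam : deriv D 0 = lam) (hlam0 : 0 < lam) (hlam1 : lam < 1)
    (hcontract : ∀ x ∈ Set.Ioo (-a) a, x ≠ 0 → |D x| < |x|)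
    (hDne : ∀ x ∈ Set.Ioo (-a) a, x ≠ 0 → D x ≠ 0)
    (h : ℝ → ℝ)
    (hh : ContDiffOn ℝ 1 h (Set.Ioo (-a) a))
    (hh0 : h 0 = 0) (hh'0 : deriv h 0 = 1)
    (hh'pos : ∀ x ∈ Set.Ioo (-a) a, 0 < deriv h x)
    (hSch : ∀ x ∈ Set.Ioo (-a) a, h (D x) = lam * h x)
    (rho : ℝ → ℝ)
    (hrho : ∀ y : ℝ, rho y = if y = 0 then 1 else D y / (deriv D y * y)) :
    ∀ x ∈ Set.Ioo (-a) a, ∃ L : ℝ,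
      Filter.Tendsto (fun n : ℕ => ∏ j ∈ Finset.range n, rho (D^[j] x))
        Filter.atTop (nhds L) ∧
      h x / deriv h x = x * L :=
  julia_solution_as_infinite_product_general a D lam hD hD0 hlam0 hlam1 hcontract h hh hh0 hh'0
    hh'pos hSch rho hrho
end

section
/- Let 0 ≤ a < b and let D : [a,b) → [a,b) be a C¹ function with D'(x) > 0 for all x ∈ [a,b), D(a) = a, 0 < D'(a) < 1, and D(x) < x for all x ∈ (a,b). If g₁, g₂ : [a,b) → ℝ satisfy Julia's equation gᵢ(D(x)) = D'(x) gᵢ(x) for all x ∈ [a,b), are both differentiable at a with g₁(a) = g₂(a) = 0 and g₁'(a) = g₂'(a) ≠ 0, then g₁(x) = g₂(x) for all x ∈ [a,b). -/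
/-!
Each step of the orbit `x, D x, D² x, …` multiplies `g₁` and `g₂` by the same factor `D'(y)`,
so `g₁ x · g₂ y = g₂ x · g₁ y` at every point `y` of the orbit. Since `D` is increasing with
`D a = a` and `D y < y` on `(a, b)`, the orbit decreases to a fixed point of `D`, which must be `a`.
Dividing by `y - a` and letting `y → a` turns the identity into `g₁ x · c = g₂ x · c`.
-/

open Set Filter Topology

lemma mul_iterate_eq_of_julia {α R : Type*} [CommSemiring R] {D : α → α} {φ g₁ g₂ : α → R}
    {s : Set α} (hD : MapsTo D s s) (h₁ : ∀ y ∈ s, g₁ (D y) = φ y * g₁ y)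
    (h₂ : ∀ y ∈ s, g₂ (D y) = φ y * g₂ y) {x : α} (hx : x ∈ s) (n : ℕ) :
    g₁ x * g₂ (D^[n] x) = g₂ x * g₁ (D^[n] x) := by
  induction n with
  | zero => exact mul_comm _ _
  | succ n ih =>
    have hn := hD.iterate n hx
    rw [Function.iterate_succ_apply', h₁ _ hn, h₂ _ hn, mul_left_comm, ih, mul_left_comm]

lemma mapsTo_Ioo_of_derivWithin_pos {D : ℝ → ℝ} {a b : ℝ} (hD : ContinuousOn D (Ico a b))
    (hmaps : MapsTo D (Ico a b) (Ico a b))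
    (hpos : ∀ x ∈ Ioo a b, 0 < derivWithin D (Ico a b) x) (hDa : D a = a) :
    MapsTo D (Ioo a b) (Ioo a b) := by
  have hmono : StrictMonoOn D (Ico a b) := by
    refine strictMonoOn_of_deriv_pos (convex_Ico a b) hD fun x hx ↦ ?_
    rw [interior_Ico] at hx
    simpa only [derivWithin_of_mem_nhds (Ico_mem_nhds hx.1 hx.2)] using hpos x hx
  intro x hx
  have hxI : x ∈ Ico a b := Ioo_subset_Ico_self hx
  refine ⟨?_, (hmaps hxI).2⟩
  simpa only [hDa] using hmono (left_mem_Ico.2 (hx.1.trans hx.2)) hxI hx.1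

lemma tendsto_iterate_nhdsGT_of_lt_self {D : ℝ → ℝ} {a b x : ℝ} (hD : ContinuousOn D (Ico a b))
    (hmaps : MapsTo D (Ioo a b) (Ioo a b)) (hlt : ∀ y ∈ Ioo a b, D y < y) (hx : x ∈ Ioo a b) :
    Tendsto (fun n ↦ D^[n] x) atTop (𝓝[>] a) := by
  have horbit : ∀ n, D^[n] x ∈ Ioo a b := fun n ↦ hmaps.iterate n hx
  have hanti : Antitone fun n ↦ D^[n] x := antitone_nat_of_succ_le fun n ↦ by
    rw [Function.iterate_succ_apply']
    exact (hlt _ (horbit n)).le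
  have hbdd : BddBelow (range fun n ↦ D^[n] x) := ⟨a, forall_mem_range.2 fun n ↦ (horbit n).1.le⟩
  have hlim := tendsto_atTop_ciInf hanti hbdd
  set L := ⨅ n, D^[n] x
  have hLa : L = a := by
    refine (le_ciInf fun n ↦ (horbit n).1.le).eq_or_lt.elim Eq.symm fun haL ↦ ?_
    have hL : L ∈ Ioo a b := ⟨haL, (ciInf_le hbdd 0).trans_lt (horbit 0).2⟩
    have hfix := isFixedPt_of_tendsto_iterate hlim
      ((hD L (Ioo_subset_Ico_self hL)).continuousAt (Ico_mem_nhds hL.1 hL.2))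
    exact absurd hfix (hlt L hL).ne
  rw [hLa] at hlim
  exact tendsto_nhdsWithin_of_tendsto_nhds_of_eventually_within _ hlim
    (Eventually.of_forall fun n ↦ (horbit n).1)

lemma eq_of_mul_eq_mul_of_hasDerivWithinAt {𝕜 ι : Type*} [NontriviallyNormedField 𝕜]
    {g₁ g₂ : 𝕜 → 𝕜} {s : Set 𝕜} {a c u v : 𝕜} (hc : c ≠ 0)
    (hg₁ : HasDerivWithinAt g₁ c s a) (hg₂ : HasDerivWithinAt g₂ c s a)
    (hg₁a : g₁ a = 0) (hg₂a : g₂ a = 0) {l : Filter ι} [l.NeBot] {y : ι → 𝕜}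
    (hy : Tendsto y l (𝓝[s \ {a}] a)) (h : ∀ i, u * g₂ (y i) = v * g₁ (y i)) : u = v := by
  have hslope₁ := ((hasDerivWithinAt_iff_tendsto_slope.1 hg₁).comp hy).const_mul v
  have hslope₂ := ((hasDerivWithinAt_iff_tendsto_slope.1 hg₂).comp hy).const_mul u
  have hsame : (fun i ↦ u * slope g₂ a (y i)) = fun i ↦ v * slope g₁ a (y i) := by
    funext i
    simp only [slope_def_field, hg₁a, hg₂a, sub_zero, mul_div_assoc', h]
  rw [Function.comp_def, hsame] at hslope₂
  exact mul_right_cancel₀ hc (tendsto_nhds_unique hslope₂ hslope₁)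

theorem julia_unique_on_Ico_general
    (a b : ℝ) (hab : a < b) (D : ℝ → ℝ)
    (hD : ContDiffOn ℝ 1 D (Set.Ico a b))
    (hmaps : Set.MapsTo D (Set.Ico a b) (Set.Ico a b))
    (hD'pos : ∀ x ∈ Set.Ico a b, 0 < derivWithin D (Set.Ico a b) x)
    (hDa : D a = a)
    (hlt : ∀ x ∈ Set.Ioo a b, D x < x)
    (g₁ g₂ : ℝ → ℝ)
    (hJ₁ : ∀ x ∈ Set.Ico a b, g₁ (D x) = derivWithin D (Set.Ico a b) x * g₁ x)
    (hJ₂ : ∀ x ∈ Set.Ico a b, g₂ (D x) = derivWithin D (Set.Ico a b) x * g₂ x)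
    (hg₁a : g₁ a = 0) (hg₂a : g₂ a = 0)
    (c : ℝ) (hc : c ≠ 0)
    (hg₁' : HasDerivWithinAt g₁ c (Set.Ico a b) a)
    (hg₂' : HasDerivWithinAt g₂ c (Set.Ico a b) a) :
    ∀ x ∈ Set.Ico a b, g₁ x = g₂ x := by
  intro x hx
  rcases hx.1.eq_or_lt with rfl | hax
  · rw [hg₁a, hg₂a]
  have hmapsIoo : MapsTo D (Ioo a b) (Ioo a b) :=
    mapsTo_Ioo_of_derivWithin_pos hD.continuousOn hmaps
      (fun y hy ↦ hD'pos y (Ioo_subset_Ico_self hy)) hDa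
  have horbit := tendsto_iterate_nhdsGT_of_lt_self hD.continuousOn hmapsIoo hlt ⟨hax, hx.2⟩
  rw [← nhdsWithin_Ioo_eq_nhdsGT hab, ← Ico_sdiff_left] at horbit
  exact eq_of_mul_eq_mul_of_hasDerivWithinAt hc hg₁' hg₂' hg₁a hg₂a horbit
    (mul_iterate_eq_of_julia hmaps hJ₁ hJ₂ hx)

/-- **Uniqueness for Julia's equation on `[a,b)` (Theorem 2.7).** Let
`D : [a,b) → [a,b)` be `C¹` with positive derivative, `D a = a`, `0 < D'(a) < 1` and
`D x < x` on `(a,b)`.  If `g₁, g₂` solve Julia's equation `gᵢ(D x) = D'(x) gᵢ(x)` on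
`[a,b)`, are differentiable at `a` with `g₁ a = g₂ a = 0` and equal nonzero derivative
`c` at `a`, then `g₁ = g₂` on `[a,b)`. -/
theorem julia_unique_on_Ico
    (a b : ℝ) (ha : 0 ≤ a) (hab : a < b) (D : ℝ → ℝ)
    (hD : ContDiffOn ℝ 1 D (Set.Ico a b))
    (hmaps : Set.MapsTo D (Set.Ico a b) (Set.Ico a b))
    (hD'pos : ∀ x ∈ Set.Ico a b, 0 < derivWithin D (Set.Ico a b) x)
    (hDa : D a = a)
    (hD'a0 : 0 < derivWithin D (Set.Ico a b) a)
    (hD'a1 : derivWithin D (Set.Ico a b) a < 1)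
    (hlt : ∀ x ∈ Set.Ioo a b, D x < x)
    (g₁ g₂ : ℝ → ℝ)
    (hJ₁ : ∀ x ∈ Set.Ico a b, g₁ (D x) = derivWithin D (Set.Ico a b) x * g₁ x)
    (hJ₂ : ∀ x ∈ Set.Ico a b, g₂ (D x) = derivWithin D (Set.Ico a b) x * g₂ x)
    (hg₁a : g₁ a = 0) (hg₂a : g₂ a = 0)
    (c : ℝ) (hc : c ≠ 0)
    (hg₁' : HasDerivWithinAt g₁ c (Set.Ico a b) a)
    (hg₂' : HasDerivWithinAt g₂ c (Set.Ico a b) a) :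
    ∀ x ∈ Set.Ico a b, g₁ x = g₂ x :=
  julia_unique_on_Ico_general a b hab D hD hmaps hD'pos hDa hlt g₁ g₂ hJ₁ hJ₂ hg₁a hg₂a c hc hg₁'
    hg₂'
end

section
/- Assume moreover that (D'(x))² x − D(x) · (d/dx)(D'(x) x) > 0 for all x ∈ (0,a], i.e. the function ρ(x) = D(x)/(D'(x) x) has positive derivative on (0,a]. Then the solution g of Julia's equation is strictly increasing on (0,a]: for all x, y ∈ (0,a] with x < y, g(x) < g(y). -/
/-!
For `x < y` in `(0,a]` every factor `ρ(Dⁿ y)` of the product for `g y` dominates the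
corresponding factor `ρ(Dⁿ x)`, because `D` is increasing and the positivity hypothesis says
exactly that `ρ = D / (D' · id)` has positive derivative. Hence `g y ≥ (y / x) g x`, which is
`> g x` once `g x > 0`. Positivity of `g` propagates along Julia's equation
`g (D x) = D'(x) g x` from the right of `0`, where `g'(0) = 1` forces `g > 0`: the orbit `Dⁿ x`
decreases to `0`, as `D` has no fixed point in `(0,a]`.
-/

open Set Filter Topology

theorem MonotoneOn.iterate {α : Type*} [Preorder α] {f : α → α} {s : Set α}
    (hf : MonotoneOn f s) (hs : MapsTo f s s) : ∀ n, MonotoneOn f^[n] s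
  | 0 => monotoneOn_id
  | n + 1 => by
    rw [Function.iterate_succ']
    exact hf.comp (hf.iterate hs n) (hs.iterate n)

theorem prod_iterate_le_prod_iterate {α : Type*} [Preorder α] {f : α → α} {ρ : α → ℝ}
    {s : Set α} (hf : MonotoneOn f s) (hs : MapsTo f s s) (hρ : MonotoneOn ρ s)
    (hρ0 : ∀ z ∈ s, 0 ≤ ρ z) {x y : α} (hx : x ∈ s) (hy : y ∈ s) (hxy : x ≤ y) (n : ℕ) :
    ∏ j ∈ Finset.range n, ρ (f^[j] x) ≤ ∏ j ∈ Finset.range n, ρ (f^[j] y) :=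
  Finset.prod_le_prod (fun j _ => hρ0 _ (hs.iterate j hx)) fun j _ =>
    hρ (hs.iterate j hx) (hs.iterate j hy) ((hf.iterate hs j) hx hy hxy)

theorem pos_of_pos_iterate {α : Type*} {f : α → α} {c g : α → ℝ} {s : Set α}
    (hs : MapsTo f s s) (hc : ∀ x ∈ s, 0 < c x) (hJ : ∀ x ∈ s, g (f x) = c x * g x) :
    ∀ n, ∀ x ∈ s, 0 < g (f^[n] x) → 0 < g x
  | 0, _, _, h => h
  | n + 1, x, hx, h => by
    rw [Function.iterate_succ_apply] at h
    have hfx : 0 < g (f x) := pos_of_pos_iterate hs hc hJ n (f x) (hs hx) h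
    rw [hJ x hx] at hfx
    exact pos_of_mul_pos_right hfx (hc x hx).le

theorem tendsto_iterate_nhdsGT_zero {f : ℝ → ℝ} {a x : ℝ} (hf : ContinuousOn f (Ioc 0 a))
    (hs : MapsTo f (Ioc 0 a) (Ioc 0 a)) (hlt : ∀ y ∈ Ioc 0 a, f y < y) (hx : x ∈ Ioc 0 a) :
    Tendsto (fun n => f^[n] x) atTop (𝓝[>] 0) := by
  set u : ℕ → ℝ := fun n => f^[n] x
  have hu : ∀ n, u n ∈ Ioc 0 a := fun n => hs.iterate n hx
  have hbdd : BddBelow (range u) := ⟨0, forall_mem_range.2 fun n => (hu n).1.le⟩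
  have hanti : Antitone u := antitone_nat_of_succ_le fun n => by
    simp only [u, Function.iterate_succ_apply']
    exact (hlt _ (hu n)).le
  have hlim : Tendsto u atTop (𝓝 (⨅ n, u n)) := tendsto_atTop_ciInf hanti hbdd
  rcases (le_ciInf fun n => (hu n).1.le : (0 : ℝ) ≤ ⨅ n, u n).eq_or_lt with h0 | hpos
  · rw [← h0] at hlim
    exact tendsto_nhdsWithin_iff.2 ⟨hlim, .of_forall fun n => (hu n).1⟩
  · -- a positive limit would be a fixed point of `f`
    have hL : ⨅ n, u n ∈ Ioc 0 a := ⟨hpos, (ciInf_le hbdd 0).trans (hu 0).2⟩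
    have hf_lim : Tendsto (fun n => f (u n)) atTop (𝓝 (f (⨅ n, u n))) :=
      (hf _ hL).tendsto.comp (tendsto_nhdsWithin_iff.2 ⟨hlim, .of_forall hu⟩)
    have hshift : Tendsto (fun n => f (u n)) atTop (𝓝 (⨅ n, u n)) := by
      simpa only [u, Function.comp_def, Function.iterate_succ_apply'] using
        hlim.comp (tendsto_add_atTop_nat 1)
    exact absurd (tendsto_nhds_unique hf_lim hshift) (hlt _ hL).ne

theorem eventually_lt_of_hasDerivWithinAt_Ioi {g : ℝ → ℝ} {g' x : ℝ}
    (h : HasDerivWithinAt g g' (Ioi x) x) (hg' : 0 < g') : ∀ᶠ t in 𝓝[>] x, g x < g t := by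
  have hslope := (hasDerivWithinAt_iff_tendsto_slope' (lt_irrefl x)).1 h
  filter_upwards [hslope.eventually (lt_mem_nhds hg'), self_mem_nhdsWithin] with t ht hxt
  rw [slope_def_field] at ht
  exact sub_pos.1 ((div_pos_iff_of_pos_right (sub_pos.2 hxt)).1 ht)

theorem pos_of_map_eq_mul {f c g : ℝ → ℝ} {a g' x : ℝ} (hf : ContinuousOn f (Ioc 0 a))
    (hs : MapsTo f (Ioc 0 a) (Ioc 0 a)) (hlt : ∀ y ∈ Ioc 0 a, f y < y)
    (hc : ∀ y ∈ Ioc 0 a, 0 < c y) (hJ : ∀ y ∈ Ioc 0 a, g (f y) = c y * g y) (hg0 : g 0 = 0)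
    (hg' : HasDerivWithinAt g g' (Ioi 0) 0) (hg'pos : 0 < g') (hx : x ∈ Ioc 0 a) : 0 < g x := by
  have hnear := hg0 ▸ eventually_lt_of_hasDerivWithinAt_Ioi hg' hg'pos
  obtain ⟨n, hn⟩ := ((tendsto_iterate_nhdsGT_zero hf hs hlt hx).eventually hnear).exists
  exact pos_of_pos_iterate hs hc hJ n x hx hn

theorem strictMonoOn_div_of_hasDerivAt {u v u' v' : ℝ → ℝ} {s : Set ℝ} (hs : Convex ℝ s)
    (hu : ContinuousOn u s) (hv : ContinuousOn v s) (hv0 : ∀ x ∈ s, 0 < v x)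
    (hu' : ∀ x ∈ interior s, HasDerivAt u (u' x) x)
    (hv' : ∀ x ∈ interior s, HasDerivAt v (v' x) x)
    (hpos : ∀ x ∈ interior s, 0 < u' x * v x - u x * v' x) :
    StrictMonoOn (fun x => u x / v x) s :=
  strictMonoOn_of_hasDerivWithinAt_pos hs (hu.div hv fun x hx => (hv0 x hx).ne')
    (fun x hx => ((hu' x hx).div (hv' x hx) (hv0 x (interior_subset hx)).ne').hasDerivWithinAt)
    fun x hx => div_pos (hpos x hx) (pow_pos (hv0 x (interior_subset hx)) 2)

theorem DifferentiableOn.hasDerivAt_derivWithin_Icc {f : ℝ → ℝ} {a b x : ℝ}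
    (hf : DifferentiableOn ℝ f (Icc a b)) (hx : x ∈ Ioo a b) :
    HasDerivAt f (derivWithin f (Icc a b) x) x :=
  (hf x (Ioo_subset_Icc_self hx)).hasDerivWithinAt.hasDerivAt (Icc_mem_nhds hx.1 hx.2)

theorem DifferentiableOn.strictMonoOn_Icc_of_derivWithin_pos {f : ℝ → ℝ} {a b : ℝ}
    (hf : DifferentiableOn ℝ f (Icc a b)) (hf' : ∀ x ∈ Ioo a b, 0 < derivWithin f (Icc a b) x) :
    StrictMonoOn f (Icc a b) :=
  strictMonoOn_of_hasDerivWithinAt_pos (convex_Icc a b) hf.continuousOn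
    (fun x hx => by
      rw [interior_Icc] at hx ⊢
      exact (hf.hasDerivAt_derivWithin_Icc hx).hasDerivWithinAt)
    fun x hx => hf' x (by rwa [interior_Icc] at hx)

section Julia

variable {a : ℝ} {D : ℝ → ℝ}

theorem mapsTo_Ioc_of_strictMonoOn (hD : StrictMonoOn D (Icc 0 a)) (hD0 : D 0 = 0)
    (hDlt : ∀ x ∈ Ioc 0 a, D x < x) : MapsTo D (Ioc 0 a) (Ioc 0 a) := fun x hx =>
  ⟨hD0 ▸ hD ⟨le_rfl, hx.1.le.trans hx.2⟩ (Ioc_subset_Icc_self hx) hx.1,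
    (hDlt x hx).le.trans hx.2⟩

theorem strictMonoOn_div_derivWithin_mul_self (ha : 0 < a) (hD : ContDiffOn ℝ 2 D (Icc 0 a))
    (hD' : ∀ x ∈ Ioc 0 a, 0 < derivWithin D (Icc 0 a) x)
    (hmono : ∀ x ∈ Ioo 0 a,
      0 < (derivWithin D (Icc 0 a) x) ^ 2 * x -
        D x * derivWithin (fun y => derivWithin D (Icc 0 a) y * y) (Icc 0 a) x) :
    StrictMonoOn (fun y => D y / (derivWithin D (Icc 0 a) y * y)) (Ioc 0 a) := by
  have hDdiff : DifferentiableOn ℝ D (Icc 0 a) := hD.differentiableOn two_ne_zero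
  have hφdiff : DifferentiableOn ℝ (fun y => derivWithin D (Icc 0 a) y * y) (Icc 0 a) :=
    ((hD.derivWithin (uniqueDiffOn_Icc ha) (by norm_num)).differentiableOn
      one_ne_zero).mul differentiableOn_id
  refine strictMonoOn_div_of_hasDerivAt (convex_Ioc 0 a)
    (hDdiff.continuousOn.mono Ioc_subset_Icc_self)
    (hφdiff.continuousOn.mono Ioc_subset_Icc_self) (fun x hx => mul_pos (hD' x hx) hx.1)
    (fun x hx => hDdiff.hasDerivAt_derivWithin_Icc (by rwa [interior_Ioc] at hx))
    (fun x hx => hφdiff.hasDerivAt_derivWithin_Icc (by rwa [interior_Ioc] at hx))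
    fun x hx => by
      rw [interior_Ioc] at hx
      linear_combination hmono x hx

end Julia

theorem julia_solution_strictMono_general
    (a d : ℝ) (ha : 0 < a) (D : ℝ → ℝ)
    (hD : ContDiffOn ℝ 2 D (Set.Icc 0 a))
    (hD0 : D 0 = 0)
    (hD' : ∀ x ∈ Set.Icc 0 a,
      0 < derivWithin D (Set.Icc 0 a) x ∧ derivWithin D (Set.Icc 0 a) x < d)
    (hDlt : ∀ x ∈ Set.Ioc 0 a, D x < x)
    (rho : ℝ → ℝ)
    (hrho : ∀ y : ℝ,
      rho y = if y = 0 then 1 else D y / (derivWithin D (Set.Icc 0 a) y * y))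
    (g : ℝ → ℝ)
    (hg0 : g 0 = 0)
    (hg'0 : HasDerivWithinAt g 1 (Set.Icc 0 a) 0)
    (hJ : ∀ x ∈ Set.Icc 0 a, g (D x) = derivWithin D (Set.Icc 0 a) x * g x)
    (hgprod : ∀ x ∈ Set.Icc 0 a,
      Filter.Tendsto (fun n : ℕ => x * ∏ j ∈ Finset.range n, rho (D^[j] x))
        Filter.atTop (nhds (g x)))
    (hmono : ∀ x ∈ Set.Ioc 0 a,
      0 < (derivWithin D (Set.Icc 0 a) x) ^ 2 * x -
        D x * derivWithin (fun y => derivWithin D (Set.Icc 0 a) y * y)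
          (Set.Icc 0 a) x) :
    StrictMonoOn g (Set.Ioc 0 a) := by
  have hD'pos : ∀ x ∈ Ioc 0 a, 0 < derivWithin D (Icc 0 a) x :=
    fun x hx => (hD' x (Ioc_subset_Icc_self hx)).1
  have hDmono := (hD.differentiableOn two_ne_zero).strictMonoOn_Icc_of_derivWithin_pos
    fun x hx => (hD' x (Ioo_subset_Icc_self hx)).1
  have hmaps := mapsTo_Ioc_of_strictMonoOn hDmono hD0 hDlt
  have hρ_eq : EqOn (fun y => D y / (derivWithin D (Icc 0 a) y * y)) rho (Ioc 0 a) :=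
    fun y hy => by rw [hrho, if_neg hy.1.ne']
  have hρ : MonotoneOn rho (Ioc 0 a) := ((strictMonoOn_div_derivWithin_mul_self ha hD hD'pos
    fun x hx => hmono x (Ioo_subset_Ioc_self hx)).congr hρ_eq).monotoneOn
  have hρ0 : ∀ z ∈ Ioc 0 a, 0 ≤ rho z := fun z hz => hρ_eq hz ▸
    (div_pos (hmaps hz).1 (mul_pos (hD'pos z hz) hz.1)).le
  intro x hx y hy hxy
  have hgx : 0 < g x := pos_of_map_eq_mul (hD.continuousOn.mono Ioc_subset_Icc_self) hmaps hDlt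
    hD'pos (fun z hz => hJ z (Ioc_subset_Icc_self hz)) hg0
    (hg'0.mono_of_mem_nhdsWithin (Icc_mem_nhdsGT ha)) one_pos hx
  have hprod : ∀ n, y / x * (x * ∏ j ∈ Finset.range n, rho (D^[j] x)) ≤
      y * ∏ j ∈ Finset.range n, rho (D^[j] y) := fun n => by
    rw [← mul_assoc, div_mul_cancel₀ y hx.1.ne']
    exact mul_le_mul_of_nonneg_left (prod_iterate_le_prod_iterate
      (hDmono.monotoneOn.mono Ioc_subset_Icc_self) hmaps hρ hρ0 hx hy hxy.le n) hy.1.le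
  calc g x < y / x * g x := lt_mul_left hgx ((one_lt_div hx.1).2 hxy)
    _ ≤ g y := le_of_tendsto_of_tendsto' ((hgprod x (Ioc_subset_Icc_self hx)).const_mul _)
        (hgprod y (Ioc_subset_Icc_self hy)) hprod

/-- **Monotonicity (Lemma 3.4).** Let `D : [0,a] → ℝ` be `C²` with `D 0 = 0`,
`0 < D' < d < 1` on `[0,a]`, `D x < x` on `(0,a]`, `D''(0) ≠ 0`, and let `g` be the
solution of Julia's equation with `g 0 = 0`, `g'(0) = 1`, given by the convergent
infinite product `g(x) = x ∏_{n=0}^∞ ρ(Dⁿ(x))` with `ρ(y) = D(y)/(D'(y) y)` for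
`y ≠ 0`, `ρ(0) = 1`.  If `(D'(x))² x − D(x) (D'(x) x)' > 0` on `(0,a]` then `g` is
strictly increasing on `(0,a]`. -/
theorem julia_solution_strictMono
    (a d : ℝ) (ha : 0 < a) (hd0 : 0 < d) (hd1 : d < 1) (D : ℝ → ℝ)
    (hD : ContDiffOn ℝ 2 D (Set.Icc 0 a))
    (hD0 : D 0 = 0)
    (hD' : ∀ x ∈ Set.Icc 0 a,
      0 < derivWithin D (Set.Icc 0 a) x ∧ derivWithin D (Set.Icc 0 a) x < d)
    (hDlt : ∀ x ∈ Set.Ioc 0 a, D x < x)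
    (hD''0 : derivWithin (derivWithin D (Set.Icc 0 a)) (Set.Icc 0 a) 0 ≠ 0)
    (rho : ℝ → ℝ)
    (hrho : ∀ y : ℝ,
      rho y = if y = 0 then 1 else D y / (derivWithin D (Set.Icc 0 a) y * y))
    (g : ℝ → ℝ)
    (hg0 : g 0 = 0)
    (hg'0 : HasDerivWithinAt g 1 (Set.Icc 0 a) 0)
    (hJ : ∀ x ∈ Set.Icc 0 a, g (D x) = derivWithin D (Set.Icc 0 a) x * g x)
    (hgprod : ∀ x ∈ Set.Icc 0 a,
      Filter.Tendsto (fun n : ℕ => x * ∏ j ∈ Finset.range n, rho (D^[j] x))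
        Filter.atTop (nhds (g x)))
    (hmono : ∀ x ∈ Set.Ioc 0 a,
      0 < (derivWithin D (Set.Icc 0 a) x) ^ 2 * x -
        D x * derivWithin (fun y => derivWithin D (Set.Icc 0 a) y * y)
          (Set.Icc 0 a) x) :
    StrictMonoOn g (Set.Ioc 0 a) :=
  julia_solution_strictMono_general a d ha D hD hD0 hD' hDlt rho hrho g hg0 hg'0 hJ hgprod hmono
end

section
/- Let B > 0, r > 0, and let D₁, D₂ : [0,B] → ℝ be strictly increasing functions with D₁(0) = D₂(0) = 0, D₁ of class C¹, D₂ of class C², Dᵢ'(x) ≥ r for all x ∈ [0,B] (i = 1,2), and D₁(B) ≤ D₂(B). Then for every s ∈ [0, D₁(B)], |D₁'(D₁^{-1}(s)) − D₂'(D₂^{-1}(s))| ≤ sup_{x ∈ [0,B]} |D₁'(x) − D₂'(x)| + (1/r) · sup_{x ∈ [0,B]} |D₂''(x)| · sup_{x ∈ [0,B]} |D₁(x) − D₂(x)|. -/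
/-!
Put `xᵢ = Dᵢ⁻¹ s`, so that `D₂ x₂ = D₁ x₁`. Then
`|D₁' x₁ − D₂' x₂| ≤ |D₁' x₁ − D₂' x₁| + |D₂' x₁ − D₂' x₂|`. The first term is at most
`‖D₁' − D₂'‖_∞`. For the second, `D₂'` is `‖D₂''‖_∞`-Lipschitz, and `D₂' ≥ r` gives
`r |x₁ − x₂| ≤ |D₂ x₁ − D₂ x₂| = |D₁ x₁ − D₂ x₁| ≤ ‖D₁ − D₂‖_∞`.
-/

open Set

theorem abs_le_ciSup_abs_of_isCompact {α : Type*} [TopologicalSpace α] {s : Set α}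
    (hs : IsCompact s) {f : α → ℝ} (hf : ContinuousOn f s) {x : α} (hx : x ∈ s) :
    |f x| ≤ ⨆ y : s, |f y| :=
  le_ciSup (f := fun y : s => |f y|) (by
    rw [← image_eq_range (fun y => |f y|)]
    exact (hs.image_of_continuousOn hf.abs).bddAbove) ⟨x, hx⟩

section Icc

variable {a b : ℝ} {D : ℝ → ℝ}

theorem mul_abs_sub_le_abs_image_sub_of_le_derivWithin {r : ℝ}
    (hD : DifferentiableOn ℝ D (Icc a b)) (hr : ∀ z ∈ Icc a b, r ≤ derivWithin D (Icc a b) z)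
    {x y : ℝ} (hx : x ∈ Icc a b) (hy : y ∈ Icc a b) :
    r * |x - y| ≤ |D x - D y| := by
  wlog hxy : x ≤ y generalizing x y
  · rw [abs_sub_comm x, abs_sub_comm (D x)]
    exact this hy hx (le_of_not_ge hxy)
  have hderiv : ∀ z ∈ interior (Icc a b), r ≤ deriv D z := by
    intro z hz
    rw [← derivWithin_of_mem_nhds (mem_interior_iff_mem_nhds.mp hz)]
    exact hr z (interior_subset hz)
  have hmvt := (convex_Icc a b).mul_sub_le_image_sub_of_le_deriv hD.continuousOn
    (hD.mono interior_subset) hderiv x hx y hy hxy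
  rw [abs_sub_comm x, abs_of_nonneg (sub_nonneg.mpr hxy), abs_sub_comm]
  exact hmvt.trans (le_abs_self _)

/-- On an interval where `D' ≥ r > 0` and `|D''| ≤ C`, the function `D' ∘ D⁻¹` is
`C / r`-Lipschitz. -/
theorem abs_derivWithin_sub_le_mul_abs_image_sub {r C : ℝ} (hr₀ : 0 < r)
    (hD : DifferentiableOn ℝ D (Icc a b))
    (hD' : DifferentiableOn ℝ (derivWithin D (Icc a b)) (Icc a b))
    (hr : ∀ z ∈ Icc a b, r ≤ derivWithin D (Icc a b) z)
    (hC : ∀ z ∈ Icc a b, |derivWithin (derivWithin D (Icc a b)) (Icc a b) z| ≤ C)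
    {x y : ℝ} (hx : x ∈ Icc a b) (hy : y ∈ Icc a b) :
    |derivWithin D (Icc a b) x - derivWithin D (Icc a b) y| ≤ C / r * |D x - D y| := by
  have hC₀ : 0 ≤ C := (abs_nonneg _).trans (hC x hx)
  calc |derivWithin D (Icc a b) x - derivWithin D (Icc a b) y|
      ≤ C * |x - y| := (convex_Icc a b).norm_image_sub_le_of_norm_derivWithin_le hD' hC hy hx
    _ = C / r * (r * |x - y|) := by field_simp
    _ ≤ C / r * |D x - D y| := by
      gcongr
      exact mul_abs_sub_le_abs_image_sub_of_le_derivWithin hD hr hx hy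

end Icc

theorem inverse_derivative_stability_general
    (B r : ℝ) (hB : 0 < B) (hr : 0 < r)
    (D₁ D₂ Dinv₁ Dinv₂ : ℝ → ℝ)
    (hD₁ : ContDiffOn ℝ 1 D₁ (Set.Icc 0 B)) (hD₂ : ContDiffOn ℝ 2 D₂ (Set.Icc 0 B))
    (hD₂' : ∀ x ∈ Set.Icc 0 B, r ≤ derivWithin D₂ (Set.Icc 0 B) x)
    (hDB : D₁ B ≤ D₂ B)
    (hinv₁r : ∀ s ∈ Set.Icc 0 (D₁ B), Dinv₁ s ∈ Set.Icc 0 B ∧ D₁ (Dinv₁ s) = s)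
    (hinv₂r : ∀ s ∈ Set.Icc 0 (D₂ B), Dinv₂ s ∈ Set.Icc 0 B ∧ D₂ (Dinv₂ s) = s) :
    ∀ s ∈ Set.Icc 0 (D₁ B),
      |derivWithin D₁ (Set.Icc 0 B) (Dinv₁ s) - derivWithin D₂ (Set.Icc 0 B) (Dinv₂ s)| ≤
        (⨆ x : Set.Icc (0 : ℝ) B,
          |derivWithin D₁ (Set.Icc 0 B) x - derivWithin D₂ (Set.Icc 0 B) x|) +
        (1 / r) *
          (⨆ x : Set.Icc (0 : ℝ) B,
            |derivWithin (derivWithin D₂ (Set.Icc 0 B)) (Set.Icc 0 B) x|) *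
          (⨆ x : Set.Icc (0 : ℝ) B, |D₁ x - D₂ x|) := by
  intro s hs
  set I := Icc (0 : ℝ) B
  set d₁ := derivWithin D₁ I
  set d₂ := derivWithin D₂ I
  obtain ⟨hx₁, hDx₁⟩ := hinv₁r s hs
  obtain ⟨hx₂, hDx₂⟩ := hinv₂r s ⟨hs.1, hs.2.trans hDB⟩
  have hI : UniqueDiffOn ℝ I := uniqueDiffOn_Icc hB
  have hd₂ : ContDiffOn ℝ 1 d₂ I := hD₂.derivWithin hI (by norm_num)
  have hsup₁ : |d₁ (Dinv₁ s) - d₂ (Dinv₁ s)| ≤ ⨆ x : I, |d₁ x - d₂ x| :=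
    abs_le_ciSup_abs_of_isCompact isCompact_Icc
      ((hD₁.continuousOn_derivWithin hI le_rfl).sub hd₂.continuousOn) hx₁
  have hsup₂ : ∀ x ∈ I, |derivWithin d₂ I x| ≤ ⨆ y : I, |derivWithin d₂ I y| :=
    fun _ => abs_le_ciSup_abs_of_isCompact isCompact_Icc (hd₂.continuousOn_derivWithin hI le_rfl)
  have hsup₃ : |D₁ (Dinv₁ s) - D₂ (Dinv₁ s)| ≤ ⨆ x : I, |D₁ x - D₂ x| :=
    abs_le_ciSup_abs_of_isCompact isCompact_Icc (hD₁.continuousOn.sub hD₂.continuousOn) hx₁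
  have hlip := abs_derivWithin_sub_le_mul_abs_image_sub hr (hD₂.differentiableOn (by norm_num))
    (hd₂.differentiableOn one_ne_zero) hD₂' hsup₂ hx₁ hx₂
  rw [show D₂ (Dinv₂ s) = D₁ (Dinv₁ s) by rw [hDx₁, hDx₂], abs_sub_comm (D₂ _)] at hlip
  calc |d₁ (Dinv₁ s) - d₂ (Dinv₂ s)|
      ≤ |d₁ (Dinv₁ s) - d₂ (Dinv₁ s)| + |d₂ (Dinv₁ s) - d₂ (Dinv₂ s)| := abs_sub_le _ _ _
    _ ≤ (⨆ x : I, |d₁ x - d₂ x|) +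
        (⨆ x : I, |derivWithin d₂ I x|) / r * ⨆ x : I, |D₁ x - D₂ x| := by
      have hC₀ : 0 ≤ ⨆ x : I, |derivWithin d₂ I x| := (abs_nonneg _).trans (hsup₂ _ hx₁)
      gcongr
      exact hlip.trans (by gcongr)
    _ = _ := by ring

/-- **Lemma 4.1(ii).** Let `D₁, D₂ : [0,B] → ℝ` be strictly increasing with
`D₁ 0 = D₂ 0 = 0`, `D₁` of class `C¹`, `D₂` of class `C²`, `Dᵢ' ≥ r > 0` on `[0,B]`
(`i = 1,2`) and `D₁ B ≤ D₂ B`.  Then for every `s ∈ [0, D₁ B]`,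
`|D₁'(D₁⁻¹ s) − D₂'(D₂⁻¹ s)| ≤ ‖D₁' − D₂'‖_∞ + (1/r)‖D₂''‖_∞ ‖D₁ − D₂‖_∞`. -/
theorem inverse_derivative_stability
    (B r : ℝ) (hB : 0 < B) (hr : 0 < r)
    (D₁ D₂ Dinv₁ Dinv₂ : ℝ → ℝ)
    (hD₁ : ContDiffOn ℝ 1 D₁ (Set.Icc 0 B)) (hD₂ : ContDiffOn ℝ 2 D₂ (Set.Icc 0 B))
    (hD₁mono : StrictMonoOn D₁ (Set.Icc 0 B)) (hD₂mono : StrictMonoOn D₂ (Set.Icc 0 B))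
    (hD₁0 : D₁ 0 = 0) (hD₂0 : D₂ 0 = 0)
    (hD₁' : ∀ x ∈ Set.Icc 0 B, r ≤ derivWithin D₁ (Set.Icc 0 B) x)
    (hD₂' : ∀ x ∈ Set.Icc 0 B, r ≤ derivWithin D₂ (Set.Icc 0 B) x)
    (hDB : D₁ B ≤ D₂ B)
    (hinv₁l : ∀ x ∈ Set.Icc 0 B, Dinv₁ (D₁ x) = x)
    (hinv₁r : ∀ s ∈ Set.Icc 0 (D₁ B), Dinv₁ s ∈ Set.Icc 0 B ∧ D₁ (Dinv₁ s) = s)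
    (hinv₂l : ∀ x ∈ Set.Icc 0 B, Dinv₂ (D₂ x) = x)
    (hinv₂r : ∀ s ∈ Set.Icc 0 (D₂ B), Dinv₂ s ∈ Set.Icc 0 B ∧ D₂ (Dinv₂ s) = s) :
    ∀ s ∈ Set.Icc 0 (D₁ B),
      |derivWithin D₁ (Set.Icc 0 B) (Dinv₁ s) - derivWithin D₂ (Set.Icc 0 B) (Dinv₂ s)| ≤
        (⨆ x : Set.Icc (0 : ℝ) B,
          |derivWithin D₁ (Set.Icc 0 B) x - derivWithin D₂ (Set.Icc 0 B) x|) +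
        (1 / r) *
          (⨆ x : Set.Icc (0 : ℝ) B,
            |derivWithin (derivWithin D₂ (Set.Icc 0 B)) (Set.Icc 0 B) x|) *
          (⨆ x : Set.Icc (0 : ℝ) B, |D₁ x - D₂ x|) :=
  inverse_derivative_stability_general B r hB hr D₁ D₂ Dinv₁ Dinv₂ hD₁ hD₂ hD₂' hDB hinv₁r hinv₂r
end
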